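/- Every planar 3-tree has a 1-string B1-VPG representation. Precisely: if (H,F) is a stacked 3-tree, then there is an assignment v ↦ c(v) of an orthogonal curve with at most one bend to each vertex of H such that for all distinct vertices u, v of H: c(u) ∩ c(v) ≠ ∅ if and only if u and v are adjacent in H, and c(u) ∩ c(v) contains at most one point. -/
import Mathlib

/-- A nondegenerate horizontal closed segment in `ℝ²`. -/
def IsHSeg (c : Set (ℝ × ℝ)) : Prop :=
  ∃ p q y : ℝ, p < q ∧ c = Set.Icc p q ×ˢ ({y} : Set ℝ)

/-- A nondegenerate vertical closed segment in `ℝ²`. -/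
def IsVSeg (c : Set (ℝ × ℝ)) : Prop :=
  ∃ x p q : ℝ, p < q ∧ c = ({x} : Set ℝ) ×ˢ Set.Icc p q

/-- An orthogonal curve with at most one bend: either a single nondegenerate axis-parallel
closed segment, or the union of a nondegenerate horizontal closed segment and a nondegenerate
vertical closed segment sharing exactly one common point, which is an endpoint of both. -/
def IsB1Curve (c : Set (ℝ × ℝ)) : Prop :=
  IsHSeg c ∨ IsVSeg c ∨
    ∃ p q y x u w : ℝ, p < q ∧ u < w ∧
      c = Set.Icc p q ×ˢ ({y} : Set ℝ) ∪ ({x} : Set ℝ) ×ˢ Set.Icc u w ∧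
      ∃ pt : ℝ × ℝ,
        Set.Icc p q ×ˢ ({y} : Set ℝ) ∩ ({x} : Set ℝ) ×ˢ Set.Icc u w = {pt} ∧
        (pt = (p, y) ∨ pt = (q, y)) ∧ (pt = (x, u) ∨ pt = (x, w))

/-- Stacked 3-trees (planar 3-trees), given as a graph on an ambient vertex type together with
its finite vertex set and its collection of interior faces (3-element vertex sets). -/
inductive IsStacked3Tree {V : Type*} [DecidableEq V] :
    SimpleGraph V → Finset V → Finset (Finset V) → Prop
  | base (a b c : V) (hab : a ≠ b) (hac : a ≠ c) (hbc : b ≠ c) :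
      IsStacked3Tree (SimpleGraph.fromEdgeSet {s(a, b), s(b, c), s(a, c)})
        {a, b, c} {({a, b, c} : Finset V)}
  | stack {H : SimpleGraph V} {S : Finset V} {F : Finset (Finset V)} (a b c w : V)
      (ht : IsStacked3Tree H S F) (hf : ({a, b, c} : Finset V) ∈ F) (hw : w ∉ S) :
      IsStacked3Tree (H ⊔ SimpleGraph.fromEdgeSet {s(w, a), s(w, b), s(w, c)})
        (insert w S)
        (insert {w, a, b} (insert {w, b, c} (insert {w, a, c} (F.erase {a, b, c}))))

namespace S3TProof

/-- Curve data: an upper-right corner curve `[l,x]×{y} ∪ {x}×[d,y]`. -/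
structure Quad where
  l : ℝ
  x : ℝ
  d : ℝ
  y : ℝ

/-- closed axis-parallel rectangle -/
def rect (a b c d : ℝ) : Set (ℝ × ℝ) := Set.Icc a b ×ˢ Set.Icc c d

/-- the curve of a quad -/
def K (q : Quad) : Set (ℝ × ℝ) := rect q.l q.x q.y q.y ∪ rect q.x q.x q.d q.y

def QOK (q : Quad) : Prop := q.l < q.x ∧ q.d < q.y

lemma QOK_mk {a b c d : ℝ} (h1 : a < b) (h2 : c < d) : QOK ⟨a, b, c, d⟩ := ⟨h1, h2⟩

@[simp] lemma Quad.mk_l (a b c d : ℝ) : (Quad.mk a b c d).l = a := rfl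
@[simp] lemma Quad.mk_x (a b c d : ℝ) : (Quad.mk a b c d).x = b := rfl
@[simp] lemma Quad.mk_d (a b c d : ℝ) : (Quad.mk a b c d).d = c := rfl
@[simp] lemma Quad.mk_y (a b c d : ℝ) : (Quad.mk a b c d).y = d := rfl

lemma mem_rect {p : ℝ × ℝ} {a b c d : ℝ} :
    p ∈ rect a b c d ↔ a ≤ p.1 ∧ p.1 ≤ b ∧ c ≤ p.2 ∧ p.2 ≤ d := by
  rw [rect, Set.mem_prod, Set.mem_Icc, Set.mem_Icc]; tauto

lemma rect_subset {a b c d a' b' c' d' : ℝ} (h1 : a' ≤ a) (h2 : b ≤ b') (h3 : c' ≤ c)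
    (h4 : d ≤ d') : rect a b c d ⊆ rect a' b' c' d' := by
  intro p hp
  rw [mem_rect] at hp ⊢
  exact ⟨le_trans h1 hp.1, le_trans hp.2.1 h2, le_trans h3 hp.2.2.1, le_trans hp.2.2.2 h4⟩

lemma rect_disj {a b c d a' b' c' d' : ℝ}
    (h : b < a' ∨ b' < a ∨ d < c' ∨ d' < c) :
    rect a b c d ∩ rect a' b' c' d' = ∅ := by
  ext ⟨x, y⟩
  simp only [Set.mem_inter_iff, mem_rect, Set.mem_empty_iff_false, iff_false]
  rintro ⟨⟨e1, e2, e3, e4⟩, f1, f2, f3, f4⟩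
  rcases h with h | h | h | h <;> linarith

lemma hv_cross {a b c d x y : ℝ} (h1 : a ≤ x) (h2 : x ≤ b) (h3 : c ≤ y) (h4 : y ≤ d) :
    rect a b y y ∩ rect x x c d = {(x, y)} := by
  ext ⟨u, v⟩
  simp only [Set.mem_inter_iff, mem_rect, Set.mem_singleton_iff, Prod.mk.injEq]
  constructor
  · rintro ⟨⟨g1, g2, g3, g4⟩, ⟨g5, g6, g7, g8⟩⟩
    exact ⟨le_antisymm g6 g5, le_antisymm g4 g3⟩
  · rintro ⟨rfl, rfl⟩
    exact ⟨⟨h1, h2, le_refl _, le_refl _⟩, ⟨le_refl _, le_refl _, h3, h4⟩⟩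

/-- main singleton intersection lemma: horizontal arm of `u` crosses vertical leg of `v`. -/
lemma K_inter_HxV {u v : Quad} (hl : u.l ≤ v.x) (hx : v.x < u.x) (hd : v.d ≤ u.y)
    (hy : u.y < v.y) : K u ∩ K v = {(v.x, u.y)} := by
  have e1 : rect u.l u.x u.y u.y ∩ rect v.l v.x v.y v.y = ∅ :=
    rect_disj (Or.inr (Or.inr (Or.inl hy)))
  have e2 : rect u.x u.x u.d u.y ∩ rect v.l v.x v.y v.y = ∅ :=
    rect_disj (Or.inr (Or.inr (Or.inl hy)))
  have e3 : rect u.x u.x u.d u.y ∩ rect v.x v.x v.d v.y = ∅ :=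
    rect_disj (Or.inr (Or.inl hx))
  have e4 : rect u.l u.x u.y u.y ∩ rect v.x v.x v.d v.y = {(v.x, u.y)} :=
    hv_cross hl (le_of_lt hx) hd (le_of_lt hy)
  rw [K, K, Set.union_inter_distrib_right, Set.inter_union_distrib_left,
    Set.inter_union_distrib_left, e1, e2, e3, e4]
  simp

lemma K_inter_VxH {u v : Quad} (hl : v.l ≤ u.x) (hx : u.x < v.x) (hd : u.d ≤ v.y)
    (hy : v.y < u.y) : K u ∩ K v = {(u.x, v.y)} := by
  rw [Set.inter_comm]
  exact K_inter_HxV hl hx hd hy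

lemma isB1_K {q : Quad} (h : QOK q) : IsB1Curve (K q) := by
  right; right
  refine ⟨q.l, q.x, q.y, q.x, q.d, q.y, h.1, h.2, ?_, (q.x, q.y), ?_, Or.inr rfl, Or.inr rfl⟩
  · have h1 : Set.Icc q.l q.x ×ˢ ({q.y} : Set ℝ) = rect q.l q.x q.y q.y := by
      rw [rect, Set.Icc_self]
    have h2 : ({q.x} : Set ℝ) ×ˢ Set.Icc q.d q.y = rect q.x q.x q.d q.y := by
      rw [rect, Set.Icc_self]
    rw [h1, h2]; rfl
  · have h1 : Set.Icc q.l q.x ×ˢ ({q.y} : Set ℝ) = rect q.l q.x q.y q.y := by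
      rw [rect, Set.Icc_self]
    have h2 : ({q.x} : Set ℝ) ×ˢ Set.Icc q.d q.y = rect q.x q.x q.d q.y := by
      rw [rect, Set.Icc_self]
    rw [h1, h2]
    exact hv_cross h.1.le (le_refl _) h.2.le (le_refl _)

/-- K is inside a union of three rectangles: criteria via the two pieces -/
lemma K_subset_of {q : Quad} {U : Set (ℝ × ℝ)}
    (h1 : rect q.l q.x q.y q.y ⊆ U) (h2 : rect q.x q.x q.d q.y ⊆ U) : K q ⊆ U :=
  Set.union_subset h1 h2

lemma K_disj_of {q : Quad} {A : Set (ℝ × ℝ)}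
    (h1 : rect q.l q.x q.y q.y ∩ A = ∅) (h2 : rect q.x q.x q.d q.y ∩ A = ∅) :
    K q ∩ A = ∅ := by
  rw [K, Set.union_inter_distrib_right, h1, h2, Set.union_empty]

lemma union3_subset {A B C U : Set (ℝ × ℝ)} (h1 : A ⊆ U) (h2 : B ⊆ U) (h3 : C ⊆ U) :
    A ∪ B ∪ C ⊆ U := Set.union_subset (Set.union_subset h1 h2) h3

lemma inter_union3_empty {X A B C : Set (ℝ × ℝ)} (h1 : X ∩ A = ∅) (h2 : X ∩ B = ∅)
    (h3 : X ∩ C = ∅) : X ∩ (A ∪ B ∪ C) = ∅ := by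
  rw [Set.inter_union_distrib_left, Set.inter_union_distrib_left, h1, h2, h3]
  simp

lemma union3_inter_empty {A B C X : Set (ℝ × ℝ)} (h1 : A ∩ X = ∅) (h2 : B ∩ X = ∅)
    (h3 : C ∩ X = ∅) : (A ∪ B ∪ C) ∩ X = ∅ := by
  rw [Set.union_inter_distrib_right, Set.union_inter_distrib_right, h1, h2, h3]
  simp

lemma inter_empty_of_subset {A B U : Set (ℝ × ℝ)} (hA : A ⊆ U) (hB : B ∩ U = ∅) :
    B ∩ A = ∅ :=
  Set.eq_empty_of_subset_empty (hB ▸ Set.inter_subset_inter_right B hA)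

lemma inter_empty_comm {A B : Set (ℝ × ℝ)} (h : A ∩ B = ∅) : B ∩ A = ∅ := by
  rw [Set.inter_comm]; exact h

lemma sub3_1 {A B C : Set (ℝ × ℝ)} : A ⊆ A ∪ B ∪ C :=
  (Set.subset_union_left).trans Set.subset_union_left
lemma sub3_2 {A B C : Set (ℝ × ℝ)} : B ⊆ A ∪ B ∪ C :=
  (Set.subset_union_right).trans Set.subset_union_left
lemma sub3_3 {A B C : Set (ℝ × ℝ)} : C ⊆ A ∪ B ∪ C := Set.subset_union_right

lemma union3_inter_union3 {A B C X Y Z : Set (ℝ × ℝ)}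
    (h1 : A ∩ X = ∅) (h2 : A ∩ Y = ∅) (h3 : A ∩ Z = ∅)
    (h4 : B ∩ X = ∅) (h5 : B ∩ Y = ∅) (h6 : B ∩ Z = ∅)
    (h7 : C ∩ X = ∅) (h8 : C ∩ Y = ∅) (h9 : C ∩ Z = ∅) :
    (A ∪ B ∪ C) ∩ (X ∪ Y ∪ Z) = ∅ :=
  union3_inter_empty (inter_union3_empty h1 h2 h3) (inter_union3_empty h4 h5 h6)
    (inter_union3_empty h7 h8 h9)

lemma inter_empty_of_subset' {A B U : Set (ℝ × ℝ)} (hA : A ⊆ U) (hB : U ∩ B = ∅) :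
    A ∩ B = ∅ :=
  Set.eq_empty_of_subset_empty (hB ▸ Set.inter_subset_inter_left B hA)

end S3TProof

namespace S3TProof

variable {V : Type*} [DecidableEq V]

/-- face record: type A (one vertical member p, upper horizontal q, lower horizontal r)
    or type B (two vertical members p, q and one horizontal member r). -/
inductive FRec (V : Type*) where
  | A (p q r : V) (am ap em ep lm lp gm gp bm bp um up : ℝ) : FRec V
  | B (p q r : V) (am ap em ep gm gp bm bp um up : ℝ) : FRec V

def fine : FRec V → Set (ℝ × ℝ)
  | .A _ _ _ am _ em _ lm lp gm _ _ bp um up =>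
      rect am bp lm lp ∪ rect am bp um up ∪ rect gm bp em up
  | .B _ _ _ am _ em _ gm gp bm bp um up =>
      rect am bp um up ∪ rect gm gp em up ∪ rect bm bp em up

def FaceOK (D : V → Quad) (S : Finset V) (f : Finset V) : FRec V → Prop
  | .A p q r am ap em ep lm lp gm gp bm bp um up =>
      p ∈ S ∧ q ∈ S ∧ r ∈ S ∧ p ≠ q ∧ p ≠ r ∧ q ≠ r ∧ f = {p, q, r} ∧
      am < ap ∧ ap < (D p).x ∧ (D p).x < gm ∧ gm < gp ∧ gp < bm ∧ bm < bp ∧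
      em < ep ∧ ep < (D r).y ∧ (D r).y < lm ∧ lm < lp ∧ lp < (D q).y ∧
      (D q).y < um ∧ um < up ∧
      (D p).d < em ∧ up < (D p).y ∧
      (D q).l < am ∧ bp < (D q).x ∧
      (D r).l < am ∧ bp < (D r).x
  | .B p q r am ap em ep gm gp bm bp um up =>
      p ∈ S ∧ q ∈ S ∧ r ∈ S ∧ p ≠ q ∧ p ≠ r ∧ q ≠ r ∧ f = {p, q, r} ∧
      am < ap ∧ ap < (D p).x ∧ (D p).x < gm ∧ gm < gp ∧ gp < (D q).x ∧
      (D q).x < bm ∧ bm < bp ∧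
      em < ep ∧ ep < (D r).y ∧ (D r).y < um ∧ um < up ∧
      (D p).d < em ∧ up < (D p).y ∧
      (D q).d < em ∧ up < (D q).y ∧
      (D r).l < am ∧ bp < (D r).x

def Inv (G : SimpleGraph V) (S : Finset V) (F : Finset (Finset V)) : Prop :=
  ∃ (D : V → Quad) (recs : Finset V → FRec V),
    (∀ v ∈ S, QOK (D v)) ∧
    (∀ u v : V, G.Adj u v → u ∈ S ∧ v ∈ S) ∧
    (∀ u ∈ S, ∀ v ∈ S, u ≠ v →
      (G.Adj u v → ∃ pt, K (D u) ∩ K (D v) = {pt}) ∧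
      (¬G.Adj u v → K (D u) ∩ K (D v) = ∅)) ∧
    (∀ f ∈ F, FaceOK D S f (recs f) ∧ ∀ u ∈ S, u ∉ f → K (D u) ∩ fine (recs f) = ∅) ∧
    (∀ f ∈ F, ∀ f' ∈ F, f ≠ f' → fine (recs f) ∩ fine (recs f') = ∅)

lemma FaceOK_subset {D : V → Quad} {S : Finset V} {f : Finset V} {rec : FRec V}
    (h : FaceOK D S f rec) : f ⊆ S := by
  cases rec with
  | A p q r am ap em ep lm lp gm gp bm bp um up =>
      obtain ⟨h1, h2, h3, _, _, _, hf, _⟩ := h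
      rw [hf]; intro x hx
      simp only [Finset.mem_insert, Finset.mem_singleton] at hx
      rcases hx with rfl | rfl | rfl <;> assumption
  | B p q r am ap em ep gm gp bm bp um up =>
      obtain ⟨h1, h2, h3, _, _, _, hf, _⟩ := h
      rw [hf]; intro x hx
      simp only [Finset.mem_insert, Finset.mem_singleton] at hx
      rcases hx with rfl | rfl | rfl <;> assumption

lemma FaceOK_mono {D D' : V → Quad} {S S' : Finset V} {f : Finset V} {rec : FRec V}
    (h : FaceOK D S f rec) (hS : S ⊆ S') (hD : ∀ v ∈ S, D' v = D v) :
    FaceOK D' S' f rec := by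
  cases rec with
  | A p q r am ap em ep lm lp gm gp bm bp um up =>
      obtain ⟨h1, h2, h3, h4, h5, h6, h7, hrest⟩ := h
      refine ⟨hS h1, hS h2, hS h3, h4, h5, h6, h7, ?_⟩
      rw [hD p h1, hD q h2, hD r h3]
      exact hrest
  | B p q r am ap em ep gm gp bm bp um up =>
      obtain ⟨h1, h2, h3, h4, h5, h6, h7, hrest⟩ := h
      refine ⟨hS h1, hS h2, hS h3, h4, h5, h6, h7, ?_⟩
      rw [hD p h1, hD q h2, hD r h3]
      exact hrest

lemma stepAdj (G : SimpleGraph V) (w a b c u v : V) :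
    (G ⊔ SimpleGraph.fromEdgeSet {s(w, a), s(w, b), s(w, c)}).Adj u v ↔
      G.Adj u v ∨ (u ≠ v ∧ ((u = w ∧ (v = a ∨ v = b ∨ v = c)) ∨
        (v = w ∧ (u = a ∨ u = b ∨ u = c)))) := by
  rw [SimpleGraph.sup_adj, SimpleGraph.fromEdgeSet_adj]
  simp only [Set.mem_insert_iff, Set.mem_singleton_iff, Sym2.eq_iff]
  constructor
  · rintro (h | ⟨h1, h2⟩)
    · exact Or.inl h
    · right; refine ⟨h2, ?_⟩; tauto
  · rintro (h | ⟨h1, h2⟩)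
    · exact Or.inl h
    · right; refine ⟨?_, h1⟩; tauto

lemma baseAdj (a b c u v : V) :
    (SimpleGraph.fromEdgeSet {s(a, b), s(b, c), s(a, c)}).Adj u v ↔
      u ≠ v ∧ ((u = a ∧ v = b) ∨ (u = b ∧ v = a) ∨ (u = b ∧ v = c) ∨ (u = c ∧ v = b) ∨
        (u = a ∧ v = c) ∨ (u = c ∧ v = a)) := by
  rw [SimpleGraph.fromEdgeSet_adj]
  simp only [Set.mem_insert_iff, Set.mem_singleton_iff, Sym2.eq_iff]
  constructor
  · rintro ⟨h1, h2⟩; exact ⟨h2, by tauto⟩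
  · rintro ⟨h1, h2⟩; exact ⟨by tauto, h1⟩

lemma of_three_eq {a b c p q r : V} (h : ({a, b, c} : Finset V) = {p, q, r}) (x : V) :
    (x = a ∨ x = b ∨ x = c) ↔ (x = p ∨ x = q ∨ x = r) := by
  have := Finset.ext_iff.mp h x
  simpa using this

lemma pair_three (w : V) {a b p q r : V} (hab : a ≠ b)
    (ha : a = p ∨ a = q ∨ a = r) (hb : b = p ∨ b = q ∨ b = r) :
    ({w, a, b} : Finset V) = {w, p, q} ∨ ({w, a, b} : Finset V) = {w, p, r} ∨
      ({w, a, b} : Finset V) = {w, q, r} := by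
  rcases ha with rfl | rfl | rfl <;> rcases hb with rfl | rfl | rfl
  · exact absurd rfl hab
  · exact Or.inl rfl
  · exact Or.inr (Or.inl rfl)
  · exact Or.inl (congrArg (insert w) (Finset.pair_comm _ _))
  · exact absurd rfl hab
  · exact Or.inr (Or.inr rfl)
  · exact Or.inr (Or.inl (congrArg (insert w) (Finset.pair_comm _ _)))
  · exact Or.inr (Or.inr (congrArg (insert w) (Finset.pair_comm _ _)))
  · exact absurd rfl hab

lemma ne_of_mem_notMem {s t : Finset V} {x : V} (h1 : x ∈ t) (h2 : x ∉ s) : s ≠ t :=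
  fun h => h2 (h ▸ h1)

end S3TProof

namespace S3TProof
variable {V : Type*} [DecidableEq V]
set_option linter.unusedSectionVars false

lemma inv_base (a b c : V) (hab : a ≠ b) (hac : a ≠ c) (hbc : b ≠ c) :
    Inv (SimpleGraph.fromEdgeSet {s(a, b), s(b, c), s(a, c)}) ({a, b, c} : Finset V)
      {({a, b, c} : Finset V)} := by
  classical
  set Pq : Quad := ⟨-1, 0, -10, 10⟩ with hPq
  set Qq : Quad := ⟨-20, 20, -4, -2⟩ with hQq
  set Rq : Quad := ⟨-20, 21, -5, -3⟩ with hRq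
  obtain ⟨D, hDa, hDb, hDc⟩ : ∃ D : V → Quad, D a = Pq ∧ D b = Qq ∧ D c = Rq :=
    ⟨fun v => if v = a then Pq else if v = b then Qq else Rq, if_pos rfl,
      by show (if b = a then Pq else if b = b then Qq else Rq) = Qq
         rw [if_neg (Ne.symm hab), if_pos rfl],
      by show (if c = a then Pq else if c = b then Qq else Rq) = Rq
         rw [if_neg (Ne.symm hac), if_neg (Ne.symm hbc)]⟩
  have hQP : K Qq ∩ K Pq = {((0 : ℝ), (-2 : ℝ))} := by
    have := K_inter_HxV (u := Qq) (v := Pq) (by norm_num [hPq, hQq]) (by norm_num [hPq, hQq])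
      (by norm_num [hPq, hQq]) (by norm_num [hPq, hQq])
    simpa [hPq, hQq] using this
  have hRP : K Rq ∩ K Pq = {((0 : ℝ), (-3 : ℝ))} := by
    have := K_inter_HxV (u := Rq) (v := Pq) (by norm_num [hPq, hRq]) (by norm_num [hPq, hRq])
      (by norm_num [hPq, hRq]) (by norm_num [hPq, hRq])
    simpa [hPq, hRq] using this
  have hRQ : K Rq ∩ K Qq = {((20 : ℝ), (-3 : ℝ))} := by
    have := K_inter_HxV (u := Rq) (v := Qq) (by norm_num [hQq, hRq]) (by norm_num [hQq, hRq])
      (by norm_num [hQq, hRq]) (by norm_num [hQq, hRq])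
    simpa [hQq, hRq] using this
  have hPQ : K Pq ∩ K Qq = {((0 : ℝ), (-2 : ℝ))} := by rw [Set.inter_comm]; exact hQP
  have hPR : K Pq ∩ K Rq = {((0 : ℝ), (-3 : ℝ))} := by rw [Set.inter_comm]; exact hRP
  have hQR : K Qq ∩ K Rq = {((20 : ℝ), (-3 : ℝ))} := by rw [Set.inter_comm]; exact hRQ
  refine ⟨D, fun _ => FRec.A a b c (-9/10) (-1/2) (-39/10) (-7/2) (-14/5) (-11/5)
    (3/10) (3/5) 1 2 1 2, ?_, ?_, ?_, ?_, ?_⟩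
  · intro v hv
    simp only [Finset.mem_insert, Finset.mem_singleton] at hv
    rcases hv with rfl | rfl | rfl <;>
      first
        | exact ⟨by rw [hDa]; norm_num [hPq], by rw [hDa]; norm_num [hPq]⟩
        | exact ⟨by rw [hDb]; norm_num [hQq], by rw [hDb]; norm_num [hQq]⟩
        | exact ⟨by rw [hDc]; norm_num [hRq], by rw [hDc]; norm_num [hRq]⟩
  · intro u v huvadj
    rw [baseAdj] at huvadj
    obtain ⟨-, h⟩ := huvadj
    constructor <;> (rcases h with ⟨rfl, rfl⟩ | ⟨rfl, rfl⟩ | ⟨rfl, rfl⟩ | ⟨rfl, rfl⟩ |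
      ⟨rfl, rfl⟩ | ⟨rfl, rfl⟩ <;> simp)
  · intro u hu v hv huv
    simp only [Finset.mem_insert, Finset.mem_singleton] at hu hv
    constructor
    · intro _
      rcases hu with rfl | rfl | rfl <;> rcases hv with rfl | rfl | rfl <;>
        first
          | exact absurd rfl huv
          | exact ⟨_, by rw [hDa, hDb]; exact hPQ⟩
          | exact ⟨_, by rw [hDa, hDc]; exact hPR⟩
          | exact ⟨_, by rw [hDb, hDa]; exact hQP⟩
          | exact ⟨_, by rw [hDb, hDc]; exact hQR⟩
          | exact ⟨_, by rw [hDc, hDa]; exact hRP⟩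
          | exact ⟨_, by rw [hDc, hDb]; exact hRQ⟩
    · intro hn
      exfalso; apply hn
      rw [baseAdj]
      refine ⟨huv, ?_⟩
      rcases hu with rfl | rfl | rfl <;> rcases hv with rfl | rfl | rfl <;> tauto
  · intro f hf
    simp only [Finset.mem_singleton] at hf
    subst hf
    constructor
    · refine ⟨by simp, by simp, by simp, hab, hac, hbc, rfl, ?_⟩
      rw [hDa, hDb, hDc]
      norm_num [hPq, hQq, hRq]
    · intro u hu hu2
      exact absurd hu hu2
  · intro f hf f' hf' hne
    simp only [Finset.mem_singleton] at hf hf'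
    exact absurd (hf.trans hf'.symm) hne

end S3TProof

namespace S3TProof
variable {V : Type*} [DecidableEq V]
set_option linter.unusedSectionVars false
set_option maxHeartbeats 10000000

lemma inv_step {G : SimpleGraph V} {S : Finset V} {F : Finset (Finset V)} (a b c w : V)
    (hinv : Inv G S F) (hfmem : ({a, b, c} : Finset V) ∈ F) (hw : w ∉ S) :
    Inv (G ⊔ SimpleGraph.fromEdgeSet {s(w, a), s(w, b), s(w, c)}) (insert w S)
      (insert {w, a, b} (insert {w, b, c} (insert {w, a, c} (F.erase {a, b, c})))) := by
  classical
  obtain ⟨D, recs, hQ, hAdjS, hPair, hFace, hFF⟩ := hinv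
  obtain ⟨hOK, hPriv⟩ := hFace _ hfmem
  have hsubS : ∀ f ∈ F, f ⊆ S := fun f hf => FaceOK_subset (hFace f hf).1
  cases hrec : recs {a, b, c} with
  | A p q r am ap em ep lm lp gm gp bm bp um up =>
  rw [hrec] at hOK
  simp only [FaceOK] at hOK
  obtain ⟨hpS, hqS, hrS, hpq, hpr, hqr, hfeq, o1, o2, o3, o4, o5, o6, r1, r2, r3, r4,
    r5, r6, r7, m1, m2, m3, m4, m5, m6⟩ := hOK
  have hWok : (am + (ap - am) * (1/16)) < (bm + (bp - bm) * (6/16)) ∧ (em + (ep - em) * (3/32)) < (um + (up - um) * (6/16)) := by constructor <;> linarith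
  have hKwp : K (⟨(am + (ap - am) * (1/16)), (bm + (bp - bm) * (6/16)), (em + (ep - em) * (3/32)), (um + (up - um) * (6/16))⟩ : Quad) ∩ K (D p) = {(((D p).x, (um + (up - um) * (6/16))))} := by
    apply K_inter_HxV <;> simp only [Quad.mk_l, Quad.mk_x, Quad.mk_d, Quad.mk_y] <;> linarith
  have hKwq : K (⟨(am + (ap - am) * (1/16)), (bm + (bp - bm) * (6/16)), (em + (ep - em) * (3/32)), (um + (up - um) * (6/16))⟩ : Quad) ∩ K (D q) = {(((bm + (bp - bm) * (6/16)), (D q).y))} := by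
    apply K_inter_VxH <;> simp only [Quad.mk_l, Quad.mk_x, Quad.mk_d, Quad.mk_y] <;> linarith
  have hKwr : K (⟨(am + (ap - am) * (1/16)), (bm + (bp - bm) * (6/16)), (em + (ep - em) * (3/32)), (um + (up - um) * (6/16))⟩ : Quad) ∩ K (D r) = {(((bm + (bp - bm) * (6/16)), (D r).y))} := by
    apply K_inter_VxH <;> simp only [Quad.mk_l, Quad.mk_x, Quad.mk_d, Quad.mk_y] <;> linarith
  have hws1 : rect (am + (ap - am) * (1/16)) (bm + (bp - bm) * (6/16)) (um + (up - um) * (6/16)) (um + (up - um) * (6/16)) ⊆ rect am bp um up := by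
    refine rect_subset ?_ ?_ ?_ ?_ <;> linarith
  have hws2 : rect (bm + (bp - bm) * (6/16)) (bm + (bp - bm) * (6/16)) (em + (ep - em) * (3/32)) (um + (up - um) * (6/16)) ⊆ rect gm bp em up := by
    refine rect_subset ?_ ?_ ?_ ?_ <;> linarith
  have hsubU1 : rect (am + (ap - am) * (2/16)) (bm + (bp - bm) * (2/16)) (um + (up - um) * (3/16)) (um + (up - um) * (4/16)) ∪ rect (am + (ap - am) * (2/16)) (bm + (bp - bm) * (2/16)) (um + (up - um) * (11/16)) (um + (up - um) * (13/16)) ∪ rect (gm + (gp - gm) * (4/16)) (bm + (bp - bm) * (2/16)) (lm + (lp - lm) * (10/16)) (um + (up - um) * (13/16)) ⊆ rect am bp lm lp ∪ rect am bp um up ∪ rect gm bp em up := by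
    refine union3_subset (Set.Subset.trans (rect_subset ?_ ?_ ?_ ?_) sub3_2)
      (Set.Subset.trans (rect_subset ?_ ?_ ?_ ?_) sub3_2)
      (Set.Subset.trans (rect_subset ?_ ?_ ?_ ?_) sub3_3) <;> linarith
  have hsubU2 : rect (am + (ap - am) * (4/16)) (bm + (bp - bm) * (8/16)) (lm + (lp - lm) * (1/16)) (lm + (lp - lm) * (2/16)) ∪ rect (gm + (gp - gm) * (1/16)) (gm + (gp - gm) * (2/16)) (em + (ep - em) * (4/16)) (lm + (lp - lm) * (2/16)) ∪ rect (bm + (bp - bm) * (7/16)) (bm + (bp - bm) * (8/16)) (em + (ep - em) * (4/16)) (lm + (lp - lm) * (2/16)) ⊆ rect am bp lm lp ∪ rect am bp um up ∪ rect gm bp em up := by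
    refine union3_subset (Set.Subset.trans (rect_subset ?_ ?_ ?_ ?_) sub3_1)
      (Set.Subset.trans (rect_subset ?_ ?_ ?_ ?_) sub3_3)
      (Set.Subset.trans (rect_subset ?_ ?_ ?_ ?_) sub3_3) <;> linarith
  have hsubU3 : rect (bm + (bp - bm) * (3/16)) (bm + (bp - bm) * (13/16)) (lm + (lp - lm) * (5/16)) (lm + (lp - lm) * (7/16)) ∪ rect (bm + (bp - bm) * (3/16)) (bm + (bp - bm) * (13/16)) (um + (up - um) * (1/16)) (um + (up - um) * (2/16)) ∪ rect (bm + (bp - bm) * (9/16)) (bm + (bp - bm) * (13/16)) (em + (ep - em) * (7/16)) (um + (up - um) * (2/16)) ⊆ rect am bp lm lp ∪ rect am bp um up ∪ rect gm bp em up := by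
    refine union3_subset (Set.Subset.trans (rect_subset ?_ ?_ ?_ ?_) sub3_1)
      (Set.Subset.trans (rect_subset ?_ ?_ ?_ ?_) sub3_2)
      (Set.Subset.trans (rect_subset ?_ ?_ ?_ ?_) sub3_3) <;> linarith
  have hdU12 : (rect (am + (ap - am) * (2/16)) (bm + (bp - bm) * (2/16)) (um + (up - um) * (3/16)) (um + (up - um) * (4/16)) ∪ rect (am + (ap - am) * (2/16)) (bm + (bp - bm) * (2/16)) (um + (up - um) * (11/16)) (um + (up - um) * (13/16)) ∪ rect (gm + (gp - gm) * (4/16)) (bm + (bp - bm) * (2/16)) (lm + (lp - lm) * (10/16)) (um + (up - um) * (13/16))) ∩ (rect (am + (ap - am) * (4/16)) (bm + (bp - bm) * (8/16)) (lm + (lp - lm) * (1/16)) (lm + (lp - lm) * (2/16)) ∪ rect (gm + (gp - gm) * (1/16)) (gm + (gp - gm) * (2/16)) (em + (ep - em) * (4/16)) (lm + (lp - lm) * (2/16)) ∪ rect (bm + (bp - bm) * (7/16)) (bm + (bp - bm) * (8/16)) (em + (ep - em) * (4/16)) (lm + (lp - lm) * (2/16))) = ∅ := by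
    exact union3_inter_union3 (rect_disj (Or.inr (Or.inr (Or.inr (by linarith))))) (rect_disj (Or.inr (Or.inr (Or.inr (by linarith))))) (rect_disj (Or.inr (Or.inr (Or.inr (by linarith)))))
      (rect_disj (Or.inr (Or.inr (Or.inr (by linarith))))) (rect_disj (Or.inr (Or.inr (Or.inr (by linarith))))) (rect_disj (Or.inr (Or.inr (Or.inr (by linarith))))) (rect_disj (Or.inr (Or.inr (Or.inr (by linarith))))) (rect_disj (Or.inr (Or.inl (by linarith)))) (rect_disj (Or.inl (by linarith)))
  have hdU13 : (rect (am + (ap - am) * (2/16)) (bm + (bp - bm) * (2/16)) (um + (up - um) * (3/16)) (um + (up - um) * (4/16)) ∪ rect (am + (ap - am) * (2/16)) (bm + (bp - bm) * (2/16)) (um + (up - um) * (11/16)) (um + (up - um) * (13/16)) ∪ rect (gm + (gp - gm) * (4/16)) (bm + (bp - bm) * (2/16)) (lm + (lp - lm) * (10/16)) (um + (up - um) * (13/16))) ∩ (rect (bm + (bp - bm) * (3/16)) (bm + (bp - bm) * (13/16)) (lm + (lp - lm) * (5/16)) (lm + (lp - lm) * (7/16)) ∪ rect (bm + (bp - bm)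 * (3/16)) (bm + (bp - bm) * (13/16)) (um + (up - um) * (1/16)) (um + (up - um) * (2/16)) ∪ rect (bm + (bp - bm) * (9/16)) (bm + (bp - bm) * (13/16)) (em + (ep - em) * (7/16)) (um + (up - um) * (2/16))) = ∅ := by
    exact union3_inter_union3 (rect_disj (Or.inl (by linarith))) (rect_disj (Or.inl (by linarith))) (rect_disj (Or.inl (by linarith)))
      (rect_disj (Or.inl (by linarith))) (rect_disj (Or.inl (by linarith))) (rect_disj (Or.inl (by linarith))) (rect_disj (Or.inl (by linarith))) (rect_disj (Or.inl (by linarith))) (rect_disj (Or.inl (by linarith)))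
  have hdU23 : (rect (am + (ap - am) * (4/16)) (bm + (bp - bm) * (8/16)) (lm + (lp - lm) * (1/16)) (lm + (lp - lm) * (2/16)) ∪ rect (gm + (gp - gm) * (1/16)) (gm + (gp - gm) * (2/16)) (em + (ep - em) * (4/16)) (lm + (lp - lm) * (2/16)) ∪ rect (bm + (bp - bm) * (7/16)) (bm + (bp - bm) * (8/16)) (em + (ep - em) * (4/16)) (lm + (lp - lm) * (2/16))) ∩ (rect (bm + (bp - bm) * (3/16)) (bm + (bp - bm) * (13/16)) (lm + (lp - lm) * (5/16)) (lm + (lp - lm) * (7/16)) ∪ rect (bm + (bp - bm) * (3/16)) (bm + (bp - bm) * (13/16)) (um + (up - um) * (1/16)) (um + (up - um) * (2/16)) ∪ rect (bm + (bp - bm) * (9/16)) (bm + (bp - bm) * (13/16)) (em + (ep - em) * (7/16)) (um + (up - um) * (2/16))) = ∅ := by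
    exact union3_inter_union3 (rect_disj (Or.inr (Or.inr (Or.inl (by linarith))))) (rect_disj (Or.inr (Or.inr (Or.inl (by linarith))))) (rect_disj (Or.inl (by linarith)))
      (rect_disj (Or.inl (by linarith))) (rect_disj (Or.inl (by linarith))) (rect_disj (Or.inl (by linarith))) (rect_disj (Or.inr (Or.inr (Or.inl (by linarith))))) (rect_disj (Or.inr (Or.inr (Or.inl (by linarith))))) (rect_disj (Or.inl (by linarith)))
  have hxU1 : K (D r) ∩ (rect (am + (ap - am) * (2/16)) (bm + (bp - bm) * (2/16)) (um + (up - um) * (3/16)) (um + (up - um) * (4/16)) ∪ rect (am + (ap - am) * (2/16)) (bm + (bp - bm) * (2/16)) (um + (up - um) * (11/16)) (um + (up - um) * (13/16)) ∪ rect (gm + (gp - gm) * (4/16)) (bm + (bp - bm) * (2/16)) (lm + (lp - lm) * (10/16)) (um + (up - um) * (13/16))) = ∅ := by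
    exact K_disj_of (inter_union3_empty (rect_disj (Or.inr (Or.inr (Or.inl (by linarith))))) (rect_disj (Or.inr (Or.inr (Or.inl (by linarith))))) (rect_disj (Or.inr (Or.inr (Or.inl (by linarith)))))) (inter_union3_empty (rect_disj (Or.inr (Or.inl (by linarith)))) (rect_disj (Or.inr (Or.inl (by linarith)))) (rect_disj (Or.inr (Or.inl (by linarith)))))
  have hxU2 : K (D q) ∩ (rect (am + (ap - am) * (4/16)) (bm + (bp - bm) * (8/16)) (lm + (lp - lm) * (1/16)) (lm + (lp - lm) * (2/16)) ∪ rect (gm + (gp - gm) * (1/16)) (gm + (gp - gm) * (2/16)) (em + (ep - em) * (4/16)) (lm + (lp - lm) * (2/16)) ∪ rect (bm + (bp - bm) * (7/16)) (bm + (bp - bm) * (8/16)) (em + (ep - em) * (4/16)) (lm + (lp - lm) * (2/16))) = ∅ := by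
    exact K_disj_of (inter_union3_empty (rect_disj (Or.inr (Or.inr (Or.inr (by linarith))))) (rect_disj (Or.inr (Or.inr (Or.inr (by linarith))))) (rect_disj (Or.inr (Or.inr (Or.inr (by linarith)))))) (inter_union3_empty (rect_disj (Or.inr (Or.inl (by linarith)))) (rect_disj (Or.inr (Or.inl (by linarith)))) (rect_disj (Or.inr (Or.inl (by linarith)))))
  have hxU3 : K (D p) ∩ (rect (bm + (bp - bm) * (3/16)) (bm + (bp - bm) * (13/16)) (lm + (lp - lm) * (5/16)) (lm + (lp - lm) * (7/16)) ∪ rect (bm + (bp - bm) * (3/16)) (bm + (bp - bm) * (13/16)) (um + (up - um) * (1/16)) (um + (up - um) * (2/16)) ∪ rect (bm + (bp - bm) * (9/16)) (bm + (bp - bm) * (13/16)) (em + (ep - em) * (7/16)) (um + (up - um) * (2/16))) = ∅ := by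
    exact K_disj_of (inter_union3_empty (rect_disj (Or.inr (Or.inr (Or.inr (by linarith))))) (rect_disj (Or.inr (Or.inr (Or.inr (by linarith))))) (rect_disj (Or.inr (Or.inr (Or.inr (by linarith)))))) (inter_union3_empty (rect_disj (Or.inl (by linarith))) (rect_disj (Or.inl (by linarith))) (rect_disj (Or.inl (by linarith))))
  have hnum1 : (am + (ap - am) * (2/16)) < (am + (ap - am) * (3/16)) ∧
      (am + (ap - am) * (3/16)) < (D p).x ∧
      (D p).x < (gm + (gp - gm) * (4/16)) ∧
      (gm + (gp - gm) * (4/16)) < (gm + (gp - gm) * (5/16)) ∧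
      (gm + (gp - gm) * (5/16)) < (bm + (bp - bm) * (1/16)) ∧
      (bm + (bp - bm) * (1/16)) < (bm + (bp - bm) * (2/16)) ∧
      (lm + (lp - lm) * (10/16)) < (lm + (lp - lm) * (11/16)) ∧
      (lm + (lp - lm) * (11/16)) < (D q).y ∧
      (D q).y < (um + (up - um) * (3/16)) ∧
      (um + (up - um) * (3/16)) < (um + (up - um) * (4/16)) ∧
      (um + (up - um) * (4/16)) < (um + (up - um) * (6/16)) ∧
      (um + (up - um) * (6/16)) < (um + (up - um) * (11/16)) ∧
      (um + (up - um) * (11/16)) < (um + (up - um) * (13/16)) ∧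
      (D p).d < (lm + (lp - lm) * (10/16)) ∧
      (um + (up - um) * (13/16)) < (D p).y ∧
      (am + (ap - am) * (1/16)) < (am + (ap - am) * (2/16)) ∧
      (bm + (bp - bm) * (2/16)) < (bm + (bp - bm) * (6/16)) ∧
      (D q).l < (am + (ap - am) * (2/16)) ∧
      (bm + (bp - bm) * (2/16)) < (D q).x := by
    refine ⟨?_, ?_, ?_, ?_, ?_, ?_, ?_, ?_, ?_, ?_, ?_, ?_, ?_, ?_, ?_, ?_, ?_, ?_, ?_⟩ <;> linarith
  have hnum2 : (am + (ap - am) * (4/16)) < (am + (ap - am) * (5/16)) ∧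
      (am + (ap - am) * (5/16)) < (D p).x ∧
      (D p).x < (gm + (gp - gm) * (1/16)) ∧
      (gm + (gp - gm) * (1/16)) < (gm + (gp - gm) * (2/16)) ∧
      (gm + (gp - gm) * (2/16)) < (bm + (bp - bm) * (6/16)) ∧
      (bm + (bp - bm) * (6/16)) < (bm + (bp - bm) * (7/16)) ∧
      (bm + (bp - bm) * (7/16)) < (bm + (bp - bm) * (8/16)) ∧
      (em + (ep - em) * (4/16)) < (em + (ep - em) * (5/16)) ∧
      (em + (ep - em) * (5/16)) < (D r).y ∧
      (D r).y < (lm + (lp - lm) * (1/16)) ∧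
      (lm + (lp - lm) * (1/16)) < (lm + (lp - lm) * (2/16)) ∧
      (D p).d < (em + (ep - em) * (4/16)) ∧
      (lm + (lp - lm) * (2/16)) < (D p).y ∧
      (em + (ep - em) * (3/32)) < (em + (ep - em) * (4/16)) ∧
      (lm + (lp - lm) * (2/16)) < (um + (up - um) * (6/16)) ∧
      (D r).l < (am + (ap - am) * (4/16)) ∧
      (bm + (bp - bm) * (8/16)) < (D r).x := by
    refine ⟨?_, ?_, ?_, ?_, ?_, ?_, ?_, ?_, ?_, ?_, ?_, ?_, ?_, ?_, ?_, ?_, ?_⟩ <;> linarith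
  have hnum3 : (bm + (bp - bm) * (3/16)) < (bm + (bp - bm) * (4/16)) ∧
      (bm + (bp - bm) * (4/16)) < (bm + (bp - bm) * (6/16)) ∧
      (bm + (bp - bm) * (6/16)) < (bm + (bp - bm) * (9/16)) ∧
      (bm + (bp - bm) * (9/16)) < (bm + (bp - bm) * (10/16)) ∧
      (bm + (bp - bm) * (10/16)) < (bm + (bp - bm) * (12/16)) ∧
      (bm + (bp - bm) * (12/16)) < (bm + (bp - bm) * (13/16)) ∧
      (em + (ep - em) * (7/16)) < (em + (ep - em) * (8/16)) ∧
      (em + (ep - em) * (8/16)) < (D r).y ∧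
      (D r).y < (lm + (lp - lm) * (5/16)) ∧
      (lm + (lp - lm) * (5/16)) < (lm + (lp - lm) * (7/16)) ∧
      (lm + (lp - lm) * (7/16)) < (D q).y ∧
      (D q).y < (um + (up - um) * (1/16)) ∧
      (um + (up - um) * (1/16)) < (um + (up - um) * (2/16)) ∧
      (em + (ep - em) * (3/32)) < (em + (ep - em) * (7/16)) ∧
      (um + (up - um) * (2/16)) < (um + (up - um) * (6/16)) ∧
      (D q).l < (bm + (bp - bm) * (3/16)) ∧
      (bm + (bp - bm) * (13/16)) < (D q).x ∧
      (D r).l < (bm + (bp - bm) * (3/16)) ∧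
      (bm + (bp - bm) * (13/16)) < (D r).x := by
    refine ⟨?_, ?_, ?_, ?_, ?_, ?_, ?_, ?_, ?_, ?_, ?_, ?_, ?_, ?_, ?_, ?_, ?_, ?_, ?_⟩ <;> linarith
  have key := of_three_eq hfeq
  have ha : a = p ∨ a = q ∨ a = r := (key a).mp (Or.inl rfl)
  have hb : b = p ∨ b = q ∨ b = r := (key b).mp (Or.inr (Or.inl rfl))
  have hc : c = p ∨ c = q ∨ c = r := (key c).mp (Or.inr (Or.inr rfl))
  have hpa : p = a ∨ p = b ∨ p = c := (key p).mpr (Or.inl rfl)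
  have hqa : q = a ∨ q = b ∨ q = c := (key q).mpr (Or.inr (Or.inl rfl))
  have hra : r = a ∨ r = b ∨ r = c := (key r).mpr (Or.inr (Or.inr rfl))
  have haS : a ∈ S := by rcases ha with rfl | rfl | rfl <;> assumption
  have hbS : b ∈ S := by rcases hb with rfl | rfl | rfl <;> assumption
  have hcS : c ∈ S := by rcases hc with rfl | rfl | rfl <;> assumption
  have hab : a ≠ b := by
    rintro rfl
    rcases hpa with h1 | h1 | h1 <;> rcases hqa with h2 | h2 | h2 <;>
      rcases hra with h3 | h3 | h3 <;>
        first
          | exact hpq (h1.trans h2.symm)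
          | exact hpr (h1.trans h3.symm)
          | exact hqr (h2.trans h3.symm)
  have hbc : b ≠ c := by
    rintro rfl
    rcases hpa with h1 | h1 | h1 <;> rcases hqa with h2 | h2 | h2 <;>
      rcases hra with h3 | h3 | h3 <;>
        first
          | exact hpq (h1.trans h2.symm)
          | exact hpr (h1.trans h3.symm)
          | exact hqr (h2.trans h3.symm)
  have hac : a ≠ c := by
    rintro rfl
    rcases hpa with h1 | h1 | h1 <;> rcases hqa with h2 | h2 | h2 <;>
      rcases hra with h3 | h3 | h3 <;>
        first
          | exact hpq (h1.trans h2.symm)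
          | exact hpr (h1.trans h3.symm)
          | exact hqr (h2.trans h3.symm)
  have hwp : w ≠ p := fun h => hw (h ▸ hpS)
  have hwq : w ≠ q := fun h => hw (h ▸ hqS)
  have hwr : w ≠ r := fun h => hw (h ▸ hrS)
  set D' : V → Quad := Function.update D w (⟨(am + (ap - am) * (1/16)), (bm + (bp - bm) * (6/16)), (em + (ep - em) * (3/32)), (um + (up - um) * (6/16))⟩ : Quad) with hD'def
  have hD'w : D' w = (⟨(am + (ap - am) * (1/16)), (bm + (bp - bm) * (6/16)), (em + (ep - em) * (3/32)), (um + (up - um) * (6/16))⟩ : Quad) := by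
    rw [hD'def]; exact Function.update_self w _ D
  have hD'v : ∀ v ∈ S, D' v = D v := by
    intro v hv
    rw [hD'def]
    apply Function.update_of_ne
    intro h
    rw [h] at hv
    exact hw hv
  have hfineP : fine (recs ({a, b, c} : Finset V)) = rect am bp lm lp ∪ rect am bp um up ∪ rect gm bp em up := by
    rw [hrec]; rfl
  have hKw_sub : K (⟨(am + (ap - am) * (1/16)), (bm + (bp - bm) * (6/16)), (em + (ep - em) * (3/32)), (um + (up - um) * (6/16))⟩ : Quad) ⊆ fine (recs ({a, b, c} : Finset V)) := by
    rw [hfineP]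
    exact K_subset_of (Set.Subset.trans hws1 sub3_2) (Set.Subset.trans hws2 sub3_3)
  set c1 : FRec V := FRec.A p w q (am + (ap - am) * (2/16)) (am + (ap - am) * (3/16)) (lm + (lp - lm) * (10/16)) (lm + (lp - lm) * (11/16)) (um + (up - um) * (3/16)) (um + (up - um) * (4/16)) (gm + (gp - gm) * (4/16)) (gm + (gp - gm) * (5/16)) (bm + (bp - bm) * (1/16)) (bm + (bp - bm) * (2/16)) (um + (up - um) * (11/16)) (um + (up - um) * (13/16)) with hc1def
  set c2 : FRec V := FRec.B p w r (am + (ap - am) * (4/16)) (am + (ap - am) * (5/16)) (em + (ep - em) * (4/16)) (em + (ep - em) * (5/16)) (gm + (gp - gm) * (1/16)) (gm + (gp - gm) * (2/16)) (bm + (bp - bm) * (7/16)) (bm + (bp - bm) * (8/16)) (lm + (lp - lm) * (1/16)) (lm + (lp - lm) * (2/16)) with hc2def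
  set c3 : FRec V := FRec.A w q r (bm + (bp - bm) * (3/16)) (bm + (bp - bm) * (4/16)) (em + (ep - em) * (7/16)) (em + (ep - em) * (8/16)) (lm + (lp - lm) * (5/16)) (lm + (lp - lm) * (7/16)) (bm + (bp - bm) * (9/16)) (bm + (bp - bm) * (10/16)) (bm + (bp - bm) * (12/16)) (bm + (bp - bm) * (13/16)) (um + (up - um) * (1/16)) (um + (up - um) * (2/16)) with hc3def
  set s1 : Finset V := {w, p, q} with hs1def
  set s2 : Finset V := {w, p, r} with hs2def
  set s3 : Finset V := {w, q, r} with hs3def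
  have hs12 : s1 ≠ s2 := by
    apply ne_of_mem_notMem (x := r) (by rw [hs2def]; simp) ?_
    rw [hs1def]; simp only [Finset.mem_insert, Finset.mem_singleton]
    push_neg
    exact ⟨hwr.symm, hpr.symm, hqr.symm⟩
  have hs13 : s1 ≠ s3 := by
    apply ne_of_mem_notMem (x := r) (by rw [hs3def]; simp) ?_
    rw [hs1def]; simp only [Finset.mem_insert, Finset.mem_singleton]
    push_neg
    exact ⟨hwr.symm, hpr.symm, hqr.symm⟩
  have hs23 : s2 ≠ s3 := by
    apply ne_of_mem_notMem (x := q) (by rw [hs3def]; simp) ?_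
    rw [hs2def]; simp only [Finset.mem_insert, Finset.mem_singleton]
    push_neg
    exact ⟨hwq.symm, hpq.symm, hqr⟩
  set recs' : Finset V → FRec V :=
    fun f => if f = s1 then c1 else if f = s2 then c2 else if f = s3 then c3 else recs f
    with hrecs'def
  have hrecs1 : recs' s1 = c1 := by simp [hrecs'def]
  have hrecs2 : recs' s2 = c2 := by simp [hrecs'def, hs12.symm]
  have hrecs3 : recs' s3 = c3 := by simp [hrecs'def, hs13.symm, hs23.symm]
  have hrecsold : ∀ f ∈ F, f ≠ ({a, b, c} : Finset V) → recs' f = recs f := by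
    intro f hf hne
    have hwf : w ∉ f := fun hm => hw (hsubS f hf hm)
    simp only [hrecs'def]
    rw [if_neg (ne_of_mem_notMem (by rw [hs1def]; simp) hwf),
      if_neg (ne_of_mem_notMem (by rw [hs2def]; simp) hwf),
      if_neg (ne_of_mem_notMem (by rw [hs3def]; simp) hwf)]
  have hmemF' : ∀ f ∈ insert ({w, a, b} : Finset V) (insert {w, b, c} (insert {w, a, c}
      (F.erase {a, b, c}))), (f = s1 ∨ f = s2 ∨ f = s3) ∨ (f ∈ F ∧ f ≠ {a, b, c}) := by
    intro f hfm
    simp only [Finset.mem_insert, Finset.mem_erase] at hfm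
    rw [hs1def, hs2def, hs3def]
    rcases hfm with rfl | rfl | rfl | ⟨hne, hmem⟩
    · exact Or.inl (pair_three w hab ha hb)
    · exact Or.inl (pair_three w hbc hb hc)
    · exact Or.inl (pair_three w hac ha hc)
    · exact Or.inr ⟨hmem, hne⟩
  have hsub1 : fine c1 ⊆ fine (recs ({a, b, c} : Finset V)) := by
    rw [hfineP, hc1def]
    exact hsubU1
  have hsub2 : fine c2 ⊆ fine (recs ({a, b, c} : Finset V)) := by
    rw [hfineP, hc2def]
    exact hsubU2
  have hsub3 : fine c3 ⊆ fine (recs ({a, b, c} : Finset V)) := by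
    rw [hfineP, hc3def]
    exact hsubU3
  have hd12 : fine c1 ∩ fine c2 = ∅ := by
    rw [hc1def, hc2def]
    exact hdU12
  have hd13 : fine c1 ∩ fine c3 = ∅ := by
    rw [hc1def, hc3def]
    exact hdU13
  have hd23 : fine c2 ∩ fine c3 = ∅ := by
    rw [hc2def, hc3def]
    exact hdU23
  have hx1 : K (D r) ∩ fine c1 = ∅ := by
    rw [hc1def]
    exact hxU1
  have hx2 : K (D q) ∩ fine c2 = ∅ := by
    rw [hc2def]
    exact hxU2
  have hx3 : K (D p) ∩ fine c3 = ∅ := by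
    rw [hc3def]
    exact hxU3
  have hFO1 : FaceOK D' (insert w S) s1 c1 := by
    rw [hc1def]
    simp only [FaceOK]
    refine ⟨Finset.mem_insert_of_mem hpS, Finset.mem_insert_self w S, Finset.mem_insert_of_mem hqS, hwp.symm, hpq, hwq, ?_, ?_⟩
    · first
        | trivial
        | exact hs1def.trans (Finset.insert_comm w p {q})
    · rw [hD'v p hpS, hD'w, hD'v q hqS]
      simp only [Quad.mk_l, Quad.mk_x, Quad.mk_d, Quad.mk_y]
      exact hnum1
  have hFO2 : FaceOK D' (insert w S) s2 c2 := by
    rw [hc2def]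
    simp only [FaceOK]
    refine ⟨Finset.mem_insert_of_mem hpS, Finset.mem_insert_self w S, Finset.mem_insert_of_mem hrS, hwp.symm, hpr, hwr, ?_, ?_⟩
    · first
        | trivial
        | exact hs2def.trans (Finset.insert_comm w p {r})
    · rw [hD'v p hpS, hD'w, hD'v r hrS]
      simp only [Quad.mk_l, Quad.mk_x, Quad.mk_d, Quad.mk_y]
      exact hnum2
  have hFO3 : FaceOK D' (insert w S) s3 c3 := by
    rw [hc3def]
    simp only [FaceOK]
    refine ⟨Finset.mem_insert_self w S, Finset.mem_insert_of_mem hqS, Finset.mem_insert_of_mem hrS, hwq, hwr, hqr, ?_, ?_⟩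
    · first
        | trivial
        | exact hs3def
    · rw [hD'w, hD'v q hqS, hD'v r hrS]
      simp only [Quad.mk_l, Quad.mk_x, Quad.mk_d, Quad.mk_y]
      exact hnum3
  refine ⟨D', recs', ?_, ?_, ?_, ?_, ?_⟩
  · intro v hv
    rw [Finset.mem_insert] at hv
    rcases hv with rfl | hvS
    · rw [hD'w]
      exact QOK_mk hWok.1 hWok.2
    · rw [hD'v v hvS]; exact hQ v hvS
  · intro u v hadj
    rw [stepAdj] at hadj
    rcases hadj with hadj | ⟨hne, ⟨rfl, h2⟩ | ⟨rfl, h2⟩⟩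
    · obtain ⟨h3, h4⟩ := hAdjS u v hadj
      exact ⟨Finset.mem_insert_of_mem h3, Finset.mem_insert_of_mem h4⟩
    · refine ⟨Finset.mem_insert_self _ _, ?_⟩
      rcases h2 with rfl | rfl | rfl
      exacts [Finset.mem_insert_of_mem haS, Finset.mem_insert_of_mem hbS,
        Finset.mem_insert_of_mem hcS]
    · refine ⟨?_, Finset.mem_insert_self _ _⟩
      rcases h2 with rfl | rfl | rfl
      exacts [Finset.mem_insert_of_mem haS, Finset.mem_insert_of_mem hbS,
        Finset.mem_insert_of_mem hcS]
  · have hadj_w : ∀ x ∈ S, (x = p ∨ x = q ∨ x = r) → ∃ pt, K (D' w) ∩ K (D' x) = {pt} := by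
      intro x hxS hx
      rw [hD'w, hD'v x hxS]
      rcases hx with rfl | rfl | rfl
      exacts [⟨_, hKwp⟩, ⟨_, hKwq⟩, ⟨_, hKwr⟩]
    have hemp_w : ∀ x ∈ S, ¬(x = p ∨ x = q ∨ x = r) → K (D' w) ∩ K (D' x) = ∅ := by
      intro x hxS hx
      rw [hD'w, hD'v x hxS]
      have hnm : x ∉ ({a, b, c} : Finset V) := by
        intro hm
        simp only [Finset.mem_insert, Finset.mem_singleton] at hm
        exact hx ((key x).mp hm)
      exact inter_empty_comm (inter_empty_of_subset hKw_sub (hPriv x hxS hnm))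
    intro u hu v hv huv
    rw [Finset.mem_insert] at hu hv
    rcases hu with rfl | huS
    · rcases hv with rfl | hvS
      · exact absurd rfl huv
      · constructor
        · intro hadj
          rw [stepAdj] at hadj
          rcases hadj with hadj | ⟨_, ⟨_, h2⟩ | ⟨h1, _⟩⟩
          · exact absurd (hAdjS _ _ hadj).1 hw
          · exact hadj_w v hvS ((key v).mp h2)
          · exact absurd (h1 ▸ hvS) hw
        · intro hnadj
          apply hemp_w v hvS
          intro hvm
          apply hnadj
          rw [stepAdj]
          exact Or.inr ⟨huv, Or.inl ⟨rfl, (key v).mpr hvm⟩⟩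
    · rcases hv with rfl | hvS
      · constructor
        · intro hadj
          rw [stepAdj] at hadj
          rcases hadj with hadj | ⟨_, ⟨h1, _⟩ | ⟨_, h2⟩⟩
          · exact absurd (hAdjS _ _ hadj).2 hw
          · exact absurd (h1 ▸ huS) hw
          · obtain ⟨pt, hpt⟩ := hadj_w u huS ((key u).mp h2)
            exact ⟨pt, by rw [Set.inter_comm]; exact hpt⟩
        · intro hnadj
          refine inter_empty_comm (hemp_w u huS ?_)
          intro hum
          apply hnadj
          rw [stepAdj]
          exact Or.inr ⟨huv, Or.inr ⟨rfl, (key u).mpr hum⟩⟩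
      · rw [hD'v u huS, hD'v v hvS]
        obtain ⟨k1, k2⟩ := hPair u huS v hvS huv
        constructor
        · intro hadj
          rw [stepAdj] at hadj
          rcases hadj with hadj | ⟨_, ⟨h1, _⟩ | ⟨h1, _⟩⟩
          · exact k1 hadj
          · exact absurd (h1 ▸ huS) hw
          · exact absurd (h1 ▸ hvS) hw
        · intro hnadj
          exact k2 (fun hadj => hnadj (by rw [stepAdj]; exact Or.inl hadj))
  · intro f hfm
    rcases hmemF' f hfm with (rfl | rfl | rfl) | ⟨hfF, hfne⟩
    · rw [hrecs1]
      refine ⟨hFO1, ?_⟩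
      intro u hu hunm
      rw [Finset.mem_insert] at hu
      rcases hu with huw | huS
      · exact absurd (by rw [huw, hs1def]; exact Finset.mem_insert_self w _) hunm
      · by_cases hum : u = r
        · rw [hum, hD'v r hrS]
          exact hx1
        · have hnm : u ∉ ({a, b, c} : Finset V) := by
            intro hm
            simp only [Finset.mem_insert, Finset.mem_singleton] at hm
            rcases (key u).mp hm with rfl | rfl | rfl
            · first
                | exact hum rfl
                | exact hunm (by rw [hs1def]; simp)
            · first
                | exact hum rfl
                | exact hunm (by rw [hs1def]; simp)
            · first
                | exact hum rfl
                | exact hunm (by rw [hs1def]; simp)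
          rw [hD'v u huS]
          exact inter_empty_of_subset hsub1 (hPriv u huS hnm)
    · rw [hrecs2]
      refine ⟨hFO2, ?_⟩
      intro u hu hunm
      rw [Finset.mem_insert] at hu
      rcases hu with huw | huS
      · exact absurd (by rw [huw, hs2def]; exact Finset.mem_insert_self w _) hunm
      · by_cases hum : u = q
        · rw [hum, hD'v q hqS]
          exact hx2
        · have hnm : u ∉ ({a, b, c} : Finset V) := by
            intro hm
            simp only [Finset.mem_insert, Finset.mem_singleton] at hm
            rcases (key u).mp hm with rfl | rfl | rfl
            · first
                | exact hum rfl
                | exact hunm (by rw [hs2def]; simp)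
            · first
                | exact hum rfl
                | exact hunm (by rw [hs2def]; simp)
            · first
                | exact hum rfl
                | exact hunm (by rw [hs2def]; simp)
          rw [hD'v u huS]
          exact inter_empty_of_subset hsub2 (hPriv u huS hnm)
    · rw [hrecs3]
      refine ⟨hFO3, ?_⟩
      intro u hu hunm
      rw [Finset.mem_insert] at hu
      rcases hu with huw | huS
      · exact absurd (by rw [huw, hs3def]; exact Finset.mem_insert_self w _) hunm
      · by_cases hum : u = p
        · rw [hum, hD'v p hpS]
          exact hx3
        · have hnm : u ∉ ({a, b, c} : Finset V) := by
            intro hm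
            simp only [Finset.mem_insert, Finset.mem_singleton] at hm
            rcases (key u).mp hm with rfl | rfl | rfl
            · first
                | exact hum rfl
                | exact hunm (by rw [hs3def]; simp)
            · first
                | exact hum rfl
                | exact hunm (by rw [hs3def]; simp)
            · first
                | exact hum rfl
                | exact hunm (by rw [hs3def]; simp)
          rw [hD'v u huS]
          exact inter_empty_of_subset hsub3 (hPriv u huS hnm)
    · have hre : recs' f = recs f := hrecsold f hfF hfne
      rw [hre]
      obtain ⟨hFOf, hPrivf⟩ := hFace f hfF
      refine ⟨FaceOK_mono hFOf (Finset.subset_insert w S) hD'v, ?_⟩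
      intro u hu hunf
      rw [Finset.mem_insert] at hu
      rcases hu with rfl | huS
      · rw [hD'w]
        exact inter_empty_of_subset' hKw_sub (hFF {a, b, c} hfmem f hfF (Ne.symm hfne))
      · rw [hD'v u huS]
        exact hPrivf u huS hunf
  · intro f hfm f' hfm' hne
    rcases hmemF' f hfm with (hf1 | hf1 | hf1) | ⟨hfF, hfne⟩ <;>
      rcases hmemF' f' hfm' with (hf2 | hf2 | hf2) | ⟨hfF', hfne'⟩
    · exact absurd (hf1.trans hf2.symm) hne
    · subst hf1; subst hf2; rw [hrecs1, hrecs2]; exact hd12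
    · subst hf1; subst hf2; rw [hrecs1, hrecs3]; exact hd13
    · subst hf1
      rw [hrecsold f' hfF' hfne', hrecs1]
      exact inter_empty_of_subset' hsub1 (hFF {a, b, c} hfmem f' hfF' (Ne.symm hfne'))
    · subst hf1; subst hf2; rw [hrecs2, hrecs1]; exact inter_empty_comm hd12
    · exact absurd (hf1.trans hf2.symm) hne
    · subst hf1; subst hf2; rw [hrecs2, hrecs3]; exact hd23
    · subst hf1
      rw [hrecsold f' hfF' hfne', hrecs2]
      exact inter_empty_of_subset' hsub2 (hFF {a, b, c} hfmem f' hfF' (Ne.symm hfne'))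
    · subst hf1; subst hf2; rw [hrecs3, hrecs1]; exact inter_empty_comm hd13
    · subst hf1; subst hf2; rw [hrecs3, hrecs2]; exact inter_empty_comm hd23
    · exact absurd (hf1.trans hf2.symm) hne
    · subst hf1
      rw [hrecsold f' hfF' hfne', hrecs3]
      exact inter_empty_of_subset' hsub3 (hFF {a, b, c} hfmem f' hfF' (Ne.symm hfne'))
    · subst hf2
      rw [hrecsold f hfF hfne, hrecs1]
      exact inter_empty_comm
        (inter_empty_of_subset' hsub1 (hFF {a, b, c} hfmem f hfF (Ne.symm hfne)))
    · subst hf2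
      rw [hrecsold f hfF hfne, hrecs2]
      exact inter_empty_comm
        (inter_empty_of_subset' hsub2 (hFF {a, b, c} hfmem f hfF (Ne.symm hfne)))
    · subst hf2
      rw [hrecsold f hfF hfne, hrecs3]
      exact inter_empty_comm
        (inter_empty_of_subset' hsub3 (hFF {a, b, c} hfmem f hfF (Ne.symm hfne)))
    · rw [hrecsold f hfF hfne, hrecsold f' hfF' hfne']
      exact hFF f hfF f' hfF' hne
  | B p q r am ap em ep gm gp bm bp um up =>
  rw [hrec] at hOK
  simp only [FaceOK] at hOK
  obtain ⟨hpS, hqS, hrS, hpq, hpr, hqr, hfeq, o1, o2, o3, o4, o5, o6, o7, r1, r2, r3,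
    r4, m1, m2, m3, m4, m5, m6⟩ := hOK
  have hWok : (am + (ap - am) * (1/16)) < (bm + (bp - bm) * (6/16)) ∧ (em + (ep - em) * (3/32)) < (um + (up - um) * (6/16)) := by constructor <;> linarith
  have hKwp : K (⟨(am + (ap - am) * (1/16)), (bm + (bp - bm) * (6/16)), (em + (ep - em) * (3/32)), (um + (up - um) * (6/16))⟩ : Quad) ∩ K (D p) = {(((D p).x, (um + (up - um) * (6/16))))} := by
    apply K_inter_HxV <;> simp only [Quad.mk_l, Quad.mk_x, Quad.mk_d, Quad.mk_y] <;> linarith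
  have hKwq : K (⟨(am + (ap - am) * (1/16)), (bm + (bp - bm) * (6/16)), (em + (ep - em) * (3/32)), (um + (up - um) * (6/16))⟩ : Quad) ∩ K (D q) = {(((D q).x, (um + (up - um) * (6/16))))} := by
    apply K_inter_HxV <;> simp only [Quad.mk_l, Quad.mk_x, Quad.mk_d, Quad.mk_y] <;> linarith
  have hKwr : K (⟨(am + (ap - am) * (1/16)), (bm + (bp - bm) * (6/16)), (em + (ep - em) * (3/32)), (um + (up - um) * (6/16))⟩ : Quad) ∩ K (D r) = {(((bm + (bp - bm) * (6/16)), (D r).y))} := by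
    apply K_inter_VxH <;> simp only [Quad.mk_l, Quad.mk_x, Quad.mk_d, Quad.mk_y] <;> linarith
  have hws1 : rect (am + (ap - am) * (1/16)) (bm + (bp - bm) * (6/16)) (um + (up - um) * (6/16)) (um + (up - um) * (6/16)) ⊆ rect am bp um up := by
    refine rect_subset ?_ ?_ ?_ ?_ <;> linarith
  have hws2 : rect (bm + (bp - bm) * (6/16)) (bm + (bp - bm) * (6/16)) (em + (ep - em) * (3/32)) (um + (up - um) * (6/16)) ⊆ rect bm bp em up := by
    refine rect_subset ?_ ?_ ?_ ?_ <;> linarith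
  have hsubU1 : rect (am + (ap - am) * (2/16)) (bm + (bp - bm) * (2/16)) (um + (up - um) * (11/16)) (um + (up - um) * (12/16)) ∪ rect (gm + (gp - gm) * (5/16)) (gm + (gp - gm) * (6/16)) (um + (up - um) * (4/16)) (um + (up - um) * (12/16)) ∪ rect (bm + (bp - bm) * (1/16)) (bm + (bp - bm) * (2/16)) (um + (up - um) * (4/16)) (um + (up - um) * (12/16)) ⊆ rect am bp um up ∪ rect gm gp em up ∪ rect bm bp em up := by
    refine union3_subset (Set.Subset.trans (rect_subset ?_ ?_ ?_ ?_) sub3_1)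
      (Set.Subset.trans (rect_subset ?_ ?_ ?_ ?_) sub3_2)
      (Set.Subset.trans (rect_subset ?_ ?_ ?_ ?_) sub3_3) <;> linarith
  have hsubU2 : rect (am + (ap - am) * (4/16)) (gm + (gp - gm) * (3/16)) (um + (up - um) * (5/32)) (um + (up - um) * (7/32)) ∪ rect (am + (ap - am) * (4/16)) (gm + (gp - gm) * (3/16)) (um + (up - um) * (7/16)) (um + (up - um) * (9/16)) ∪ rect (gm + (gp - gm) * (1/32)) (gm + (gp - gm) * (3/16)) (em + (ep - em) * (4/16)) (um + (up - um) * (9/16)) ⊆ rect am bp um up ∪ rect gm gp em up ∪ rect bm bp em up := by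
    refine union3_subset (Set.Subset.trans (rect_subset ?_ ?_ ?_ ?_) sub3_1)
      (Set.Subset.trans (rect_subset ?_ ?_ ?_ ?_) sub3_1)
      (Set.Subset.trans (rect_subset ?_ ?_ ?_ ?_) sub3_2) <;> linarith
  have hsubU3 : rect (gm + (gp - gm) * (8/16)) (bm + (bp - bm) * (10/16)) (um + (up - um) * (1/16)) (um + (up - um) * (2/16)) ∪ rect (bm + (bp - bm) * (3/16)) (bm + (bp - bm) * (4/16)) (em + (ep - em) * (7/16)) (um + (up - um) * (2/16)) ∪ rect (bm + (bp - bm) * (9/16)) (bm + (bp - bm) * (10/16)) (em + (ep - em) * (7/16)) (um + (up - um) * (2/16)) ⊆ rect am bp um up ∪ rect gm gp em up ∪ rect bm bp em up := by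
    refine union3_subset (Set.Subset.trans (rect_subset ?_ ?_ ?_ ?_) sub3_1)
      (Set.Subset.trans (rect_subset ?_ ?_ ?_ ?_) sub3_3)
      (Set.Subset.trans (rect_subset ?_ ?_ ?_ ?_) sub3_3) <;> linarith
  have hdU12 : (rect (am + (ap - am) * (2/16)) (bm + (bp - bm) * (2/16)) (um + (up - um) * (11/16)) (um + (up - um) * (12/16)) ∪ rect (gm + (gp - gm) * (5/16)) (gm + (gp - gm) * (6/16)) (um + (up - um) * (4/16)) (um + (up - um) * (12/16)) ∪ rect (bm + (bp - bm) * (1/16)) (bm + (bp - bm) * (2/16)) (um + (up - um) * (4/16)) (um + (up - um) * (12/16))) ∩ (rect (am + (ap - am) * (4/16)) (gm + (gp - gm) * (3/16)) (um + (up - um) * (5/32)) (um + (up - um) * (7/32)) ∪ rect (am + (ap - am) * (4/16)) (gm + (gp - gm) * (3/16)) (um + (up - um) * (7/16)) (um + (up - um) * (9/16)) ∪ rect (gm + (gp - gm) * (1/32)) (gm + (gp - gm) * (3/16)) (em + (ep - em) * (4/16)) (um + (up - um) * (9/16))) = ∅ := by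
    exact union3_inter_union3 (rect_disj (Or.inr (Or.inr (Or.inr (by linarith))))) (rect_disj (Or.inr (Or.inr (Or.inr (by linarith))))) (rect_disj (Or.inr (Or.inr (Or.inr (by linarith)))))
      (rect_disj (Or.inr (Or.inl (by linarith)))) (rect_disj (Or.inr (Or.inl (by linarith)))) (rect_disj (Or.inr (Or.inl (by linarith)))) (rect_disj (Or.inr (Or.inl (by linarith)))) (rect_disj (Or.inr (Or.inl (by linarith)))) (rect_disj (Or.inr (Or.inl (by linarith))))
  have hdU13 : (rect (am + (ap - am) * (2/16)) (bm + (bp - bm) * (2/16)) (um + (up - um) * (11/16)) (um + (up - um) * (12/16)) ∪ rect (gm + (gp - gm) * (5/16)) (gm + (gp - gm) * (6/16)) (um + (up - um) * (4/16)) (um + (up - um) * (12/16)) ∪ rect (bm + (bp - bm) * (1/16)) (bm + (bp - bm) * (2/16)) (um + (up - um) * (4/16)) (um + (up - um) * (12/16))) ∩ (rect (gm + (gp - gm) * (8/16)) (bm + (bp - bm) * (10/16)) (um + (up - um) * (1/16)) (um + (up - um) * (2/16)) ∪ rect (bm + (bp - bm) * (3/16)) (bm + (bp - bm) * (4/16))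 (em + (ep - em) * (7/16)) (um + (up - um) * (2/16)) ∪ rect (bm + (bp - bm) * (9/16)) (bm + (bp - bm) * (10/16)) (em + (ep - em) * (7/16)) (um + (up - um) * (2/16))) = ∅ := by
    exact union3_inter_union3 (rect_disj (Or.inr (Or.inr (Or.inr (by linarith))))) (rect_disj (Or.inr (Or.inr (Or.inr (by linarith))))) (rect_disj (Or.inr (Or.inr (Or.inr (by linarith)))))
      (rect_disj (Or.inl (by linarith))) (rect_disj (Or.inl (by linarith))) (rect_disj (Or.inl (by linarith))) (rect_disj (Or.inr (Or.inr (Or.inr (by linarith))))) (rect_disj (Or.inl (by linarith))) (rect_disj (Or.inl (by linarith)))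
  have hdU23 : (rect (am + (ap - am) * (4/16)) (gm + (gp - gm) * (3/16)) (um + (up - um) * (5/32)) (um + (up - um) * (7/32)) ∪ rect (am + (ap - am) * (4/16)) (gm + (gp - gm) * (3/16)) (um + (up - um) * (7/16)) (um + (up - um) * (9/16)) ∪ rect (gm + (gp - gm) * (1/32)) (gm + (gp - gm) * (3/16)) (em + (ep - em) * (4/16)) (um + (up - um) * (9/16))) ∩ (rect (gm + (gp - gm) * (8/16)) (bm + (bp - bm) * (10/16)) (um + (up - um) * (1/16)) (um + (up - um) * (2/16)) ∪ rect (bm + (bp - bm) * (3/16)) (bm + (bp - bm) * (4/16)) (em + (ep - em) * (7/16)) (um + (up - um) * (2/16)) ∪ rect (bm + (bp - bm) * (9/16)) (bm + (bp - bm) * (10/16)) (em + (ep - em) * (7/16)) (um + (up - um) * (2/16))) = ∅ := by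
    exact union3_inter_union3 (rect_disj (Or.inl (by linarith))) (rect_disj (Or.inl (by linarith))) (rect_disj (Or.inl (by linarith)))
      (rect_disj (Or.inl (by linarith))) (rect_disj (Or.inl (by linarith))) (rect_disj (Or.inl (by linarith))) (rect_disj (Or.inl (by linarith))) (rect_disj (Or.inl (by linarith))) (rect_disj (Or.inl (by linarith)))
  have hxU1 : K (D r) ∩ (rect (am + (ap - am) * (2/16)) (bm + (bp - bm) * (2/16)) (um + (up - um) * (11/16)) (um + (up - um) * (12/16)) ∪ rect (gm + (gp - gm) * (5/16)) (gm + (gp - gm) * (6/16)) (um + (up - um) * (4/16)) (um + (up - um) * (12/16)) ∪ rect (bm + (bp - bm) * (1/16)) (bm + (bp - bm) * (2/16)) (um + (up - um) * (4/16)) (um + (up - um) * (12/16))) = ∅ := by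
    exact K_disj_of (inter_union3_empty (rect_disj (Or.inr (Or.inr (Or.inl (by linarith))))) (rect_disj (Or.inr (Or.inr (Or.inl (by linarith))))) (rect_disj (Or.inr (Or.inr (Or.inl (by linarith)))))) (inter_union3_empty (rect_disj (Or.inr (Or.inl (by linarith)))) (rect_disj (Or.inr (Or.inl (by linarith)))) (rect_disj (Or.inr (Or.inl (by linarith)))))
  have hxU2 : K (D q) ∩ (rect (am + (ap - am) * (4/16)) (gm + (gp - gm) * (3/16)) (um + (up - um) * (5/32)) (um + (up - um) * (7/32)) ∪ rect (am + (ap - am) * (4/16)) (gm + (gp - gm) * (3/16)) (um + (up - um) * (7/16)) (um + (up - um) * (9/16)) ∪ rect (gm + (gp - gm) * (1/32)) (gm + (gp - gm) * (3/16)) (em + (ep - em) * (4/16)) (um + (up - um) * (9/16))) = ∅ := by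
    exact K_disj_of (inter_union3_empty (rect_disj (Or.inr (Or.inr (Or.inr (by linarith))))) (rect_disj (Or.inr (Or.inr (Or.inr (by linarith))))) (rect_disj (Or.inr (Or.inr (Or.inr (by linarith)))))) (inter_union3_empty (rect_disj (Or.inr (Or.inl (by linarith)))) (rect_disj (Or.inr (Or.inl (by linarith)))) (rect_disj (Or.inr (Or.inl (by linarith)))))
  have hxU3 : K (D p) ∩ (rect (gm + (gp - gm) * (8/16)) (bm + (bp - bm) * (10/16)) (um + (up - um) * (1/16)) (um + (up - um) * (2/16)) ∪ rect (bm + (bp - bm) * (3/16)) (bm + (bp - bm) * (4/16)) (em + (ep - em) * (7/16)) (um + (up - um) * (2/16)) ∪ rect (bm + (bp - bm) * (9/16)) (bm + (bp - bm) * (10/16)) (em + (ep - em) * (7/16)) (um + (up - um) * (2/16))) = ∅ := by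
    exact K_disj_of (inter_union3_empty (rect_disj (Or.inr (Or.inr (Or.inr (by linarith))))) (rect_disj (Or.inr (Or.inr (Or.inr (by linarith))))) (rect_disj (Or.inr (Or.inr (Or.inr (by linarith)))))) (inter_union3_empty (rect_disj (Or.inl (by linarith))) (rect_disj (Or.inl (by linarith))) (rect_disj (Or.inl (by linarith))))
  have hnum1 : (am + (ap - am) * (2/16)) < (am + (ap - am) * (3/16)) ∧
      (am + (ap - am) * (3/16)) < (D p).x ∧
      (D p).x < (gm + (gp - gm) * (5/16)) ∧
      (gm + (gp - gm) * (5/16)) < (gm + (gp - gm) * (6/16)) ∧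
      (gm + (gp - gm) * (6/16)) < (D q).x ∧
      (D q).x < (bm + (bp - bm) * (1/16)) ∧
      (bm + (bp - bm) * (1/16)) < (bm + (bp - bm) * (2/16)) ∧
      (um + (up - um) * (4/16)) < (um + (up - um) * (5/16)) ∧
      (um + (up - um) * (5/16)) < (um + (up - um) * (6/16)) ∧
      (um + (up - um) * (6/16)) < (um + (up - um) * (11/16)) ∧
      (um + (up - um) * (11/16)) < (um + (up - um) * (12/16)) ∧
      (D p).d < (um + (up - um) * (4/16)) ∧
      (um + (up - um) * (12/16)) < (D p).y ∧
      (D q).d < (um + (up - um) * (4/16)) ∧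
      (um + (up - um) * (12/16)) < (D q).y ∧
      (am + (ap - am) * (1/16)) < (am + (ap - am) * (2/16)) ∧
      (bm + (bp - bm) * (2/16)) < (bm + (bp - bm) * (6/16)) := by
    refine ⟨?_, ?_, ?_, ?_, ?_, ?_, ?_, ?_, ?_, ?_, ?_, ?_, ?_, ?_, ?_, ?_, ?_⟩ <;> linarith
  have hnum2 : (am + (ap - am) * (4/16)) < (am + (ap - am) * (5/16)) ∧
      (am + (ap - am) * (5/16)) < (D p).x ∧
      (D p).x < (gm + (gp - gm) * (1/32)) ∧
      (gm + (gp - gm) * (1/32)) < (gm + (gp - gm) * (2/32)) ∧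
      (gm + (gp - gm) * (2/32)) < (gm + (gp - gm) * (2/16)) ∧
      (gm + (gp - gm) * (2/16)) < (gm + (gp - gm) * (3/16)) ∧
      (em + (ep - em) * (4/16)) < (em + (ep - em) * (5/16)) ∧
      (em + (ep - em) * (5/16)) < (D r).y ∧
      (D r).y < (um + (up - um) * (5/32)) ∧
      (um + (up - um) * (5/32)) < (um + (up - um) * (7/32)) ∧
      (um + (up - um) * (7/32)) < (um + (up - um) * (6/16)) ∧
      (um + (up - um) * (6/16)) < (um + (up - um) * (7/16)) ∧
      (um + (up - um) * (7/16)) < (um + (up - um) * (9/16)) ∧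
      (D p).d < (em + (ep - em) * (4/16)) ∧
      (um + (up - um) * (9/16)) < (D p).y ∧
      (am + (ap - am) * (1/16)) < (am + (ap - am) * (4/16)) ∧
      (gm + (gp - gm) * (3/16)) < (bm + (bp - bm) * (6/16)) ∧
      (D r).l < (am + (ap - am) * (4/16)) ∧
      (gm + (gp - gm) * (3/16)) < (D r).x := by
    refine ⟨?_, ?_, ?_, ?_, ?_, ?_, ?_, ?_, ?_, ?_, ?_, ?_, ?_, ?_, ?_, ?_, ?_, ?_, ?_⟩ <;> linarith
  have hnum3 : (gm + (gp - gm) * (8/16)) < (gm + (gp - gm) * (9/16)) ∧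
      (gm + (gp - gm) * (9/16)) < (D q).x ∧
      (D q).x < (bm + (bp - bm) * (3/16)) ∧
      (bm + (bp - bm) * (3/16)) < (bm + (bp - bm) * (4/16)) ∧
      (bm + (bp - bm) * (4/16)) < (bm + (bp - bm) * (6/16)) ∧
      (bm + (bp - bm) * (6/16)) < (bm + (bp - bm) * (9/16)) ∧
      (bm + (bp - bm) * (9/16)) < (bm + (bp - bm) * (10/16)) ∧
      (em + (ep - em) * (7/16)) < (em + (ep - em) * (8/16)) ∧
      (em + (ep - em) * (8/16)) < (D r).y ∧
      (D r).y < (um + (up - um) * (1/16)) ∧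
      (um + (up - um) * (1/16)) < (um + (up - um) * (2/16)) ∧
      (D q).d < (em + (ep - em) * (7/16)) ∧
      (um + (up - um) * (2/16)) < (D q).y ∧
      (em + (ep - em) * (3/32)) < (em + (ep - em) * (7/16)) ∧
      (um + (up - um) * (2/16)) < (um + (up - um) * (6/16)) ∧
      (D r).l < (gm + (gp - gm) * (8/16)) ∧
      (bm + (bp - bm) * (10/16)) < (D r).x := by
    refine ⟨?_, ?_, ?_, ?_, ?_, ?_, ?_, ?_, ?_, ?_, ?_, ?_, ?_, ?_, ?_, ?_, ?_⟩ <;> linarith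
  have key := of_three_eq hfeq
  have ha : a = p ∨ a = q ∨ a = r := (key a).mp (Or.inl rfl)
  have hb : b = p ∨ b = q ∨ b = r := (key b).mp (Or.inr (Or.inl rfl))
  have hc : c = p ∨ c = q ∨ c = r := (key c).mp (Or.inr (Or.inr rfl))
  have hpa : p = a ∨ p = b ∨ p = c := (key p).mpr (Or.inl rfl)
  have hqa : q = a ∨ q = b ∨ q = c := (key q).mpr (Or.inr (Or.inl rfl))
  have hra : r = a ∨ r = b ∨ r = c := (key r).mpr (Or.inr (Or.inr rfl))
  have haS : a ∈ S := by rcases ha with rfl | rfl | rfl <;> assumption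
  have hbS : b ∈ S := by rcases hb with rfl | rfl | rfl <;> assumption
  have hcS : c ∈ S := by rcases hc with rfl | rfl | rfl <;> assumption
  have hab : a ≠ b := by
    rintro rfl
    rcases hpa with h1 | h1 | h1 <;> rcases hqa with h2 | h2 | h2 <;>
      rcases hra with h3 | h3 | h3 <;>
        first
          | exact hpq (h1.trans h2.symm)
          | exact hpr (h1.trans h3.symm)
          | exact hqr (h2.trans h3.symm)
  have hbc : b ≠ c := by
    rintro rfl
    rcases hpa with h1 | h1 | h1 <;> rcases hqa with h2 | h2 | h2 <;>
      rcases hra with h3 | h3 | h3 <;>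
        first
          | exact hpq (h1.trans h2.symm)
          | exact hpr (h1.trans h3.symm)
          | exact hqr (h2.trans h3.symm)
  have hac : a ≠ c := by
    rintro rfl
    rcases hpa with h1 | h1 | h1 <;> rcases hqa with h2 | h2 | h2 <;>
      rcases hra with h3 | h3 | h3 <;>
        first
          | exact hpq (h1.trans h2.symm)
          | exact hpr (h1.trans h3.symm)
          | exact hqr (h2.trans h3.symm)
  have hwp : w ≠ p := fun h => hw (h ▸ hpS)
  have hwq : w ≠ q := fun h => hw (h ▸ hqS)
  have hwr : w ≠ r := fun h => hw (h ▸ hrS)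
  set D' : V → Quad := Function.update D w (⟨(am + (ap - am) * (1/16)), (bm + (bp - bm) * (6/16)), (em + (ep - em) * (3/32)), (um + (up - um) * (6/16))⟩ : Quad) with hD'def
  have hD'w : D' w = (⟨(am + (ap - am) * (1/16)), (bm + (bp - bm) * (6/16)), (em + (ep - em) * (3/32)), (um + (up - um) * (6/16))⟩ : Quad) := by
    rw [hD'def]; exact Function.update_self w _ D
  have hD'v : ∀ v ∈ S, D' v = D v := by
    intro v hv
    rw [hD'def]
    apply Function.update_of_ne
    intro h
    rw [h] at hv
    exact hw hv
  have hfineP : fine (recs ({a, b, c} : Finset V)) = rect am bp um up ∪ rect gm gp em up ∪ rect bm bp em up := by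
    rw [hrec]; rfl
  have hKw_sub : K (⟨(am + (ap - am) * (1/16)), (bm + (bp - bm) * (6/16)), (em + (ep - em) * (3/32)), (um + (up - um) * (6/16))⟩ : Quad) ⊆ fine (recs ({a, b, c} : Finset V)) := by
    rw [hfineP]
    exact K_subset_of (Set.Subset.trans hws1 sub3_1) (Set.Subset.trans hws2 sub3_3)
  set c1 : FRec V := FRec.B p q w (am + (ap - am) * (2/16)) (am + (ap - am) * (3/16)) (um + (up - um) * (4/16)) (um + (up - um) * (5/16)) (gm + (gp - gm) * (5/16)) (gm + (gp - gm) * (6/16)) (bm + (bp - bm) * (1/16)) (bm + (bp - bm) * (2/16)) (um + (up - um) * (11/16)) (um + (up - um) * (12/16)) with hc1def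
  set c2 : FRec V := FRec.A p w r (am + (ap - am) * (4/16)) (am + (ap - am) * (5/16)) (em + (ep - em) * (4/16)) (em + (ep - em) * (5/16)) (um + (up - um) * (5/32)) (um + (up - um) * (7/32)) (gm + (gp - gm) * (1/32)) (gm + (gp - gm) * (2/32)) (gm + (gp - gm) * (2/16)) (gm + (gp - gm) * (3/16)) (um + (up - um) * (7/16)) (um + (up - um) * (9/16)) with hc2def
  set c3 : FRec V := FRec.B q w r (gm + (gp - gm) * (8/16)) (gm + (gp - gm) * (9/16)) (em + (ep - em) * (7/16)) (em + (ep - em) * (8/16)) (bm + (bp - bm) * (3/16)) (bm + (bp - bm) * (4/16)) (bm + (bp - bm) * (9/16)) (bm + (bp - bm) * (10/16)) (um + (up - um) * (1/16)) (um + (up - um) * (2/16)) with hc3def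
  set s1 : Finset V := {w, p, q} with hs1def
  set s2 : Finset V := {w, p, r} with hs2def
  set s3 : Finset V := {w, q, r} with hs3def
  have hs12 : s1 ≠ s2 := by
    apply ne_of_mem_notMem (x := r) (by rw [hs2def]; simp) ?_
    rw [hs1def]; simp only [Finset.mem_insert, Finset.mem_singleton]
    push_neg
    exact ⟨hwr.symm, hpr.symm, hqr.symm⟩
  have hs13 : s1 ≠ s3 := by
    apply ne_of_mem_notMem (x := r) (by rw [hs3def]; simp) ?_
    rw [hs1def]; simp only [Finset.mem_insert, Finset.mem_singleton]
    push_neg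
    exact ⟨hwr.symm, hpr.symm, hqr.symm⟩
  have hs23 : s2 ≠ s3 := by
    apply ne_of_mem_notMem (x := q) (by rw [hs3def]; simp) ?_
    rw [hs2def]; simp only [Finset.mem_insert, Finset.mem_singleton]
    push_neg
    exact ⟨hwq.symm, hpq.symm, hqr⟩
  set recs' : Finset V → FRec V :=
    fun f => if f = s1 then c1 else if f = s2 then c2 else if f = s3 then c3 else recs f
    with hrecs'def
  have hrecs1 : recs' s1 = c1 := by simp [hrecs'def]
  have hrecs2 : recs' s2 = c2 := by simp [hrecs'def, hs12.symm]
  have hrecs3 : recs' s3 = c3 := by simp [hrecs'def, hs13.symm, hs23.symm]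
  have hrecsold : ∀ f ∈ F, f ≠ ({a, b, c} : Finset V) → recs' f = recs f := by
    intro f hf hne
    have hwf : w ∉ f := fun hm => hw (hsubS f hf hm)
    simp only [hrecs'def]
    rw [if_neg (ne_of_mem_notMem (by rw [hs1def]; simp) hwf),
      if_neg (ne_of_mem_notMem (by rw [hs2def]; simp) hwf),
      if_neg (ne_of_mem_notMem (by rw [hs3def]; simp) hwf)]
  have hmemF' : ∀ f ∈ insert ({w, a, b} : Finset V) (insert {w, b, c} (insert {w, a, c}
      (F.erase {a, b, c}))), (f = s1 ∨ f = s2 ∨ f = s3) ∨ (f ∈ F ∧ f ≠ {a, b, c}) := by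
    intro f hfm
    simp only [Finset.mem_insert, Finset.mem_erase] at hfm
    rw [hs1def, hs2def, hs3def]
    rcases hfm with rfl | rfl | rfl | ⟨hne, hmem⟩
    · exact Or.inl (pair_three w hab ha hb)
    · exact Or.inl (pair_three w hbc hb hc)
    · exact Or.inl (pair_three w hac ha hc)
    · exact Or.inr ⟨hmem, hne⟩
  have hsub1 : fine c1 ⊆ fine (recs ({a, b, c} : Finset V)) := by
    rw [hfineP, hc1def]
    exact hsubU1
  have hsub2 : fine c2 ⊆ fine (recs ({a, b, c} : Finset V)) := by
    rw [hfineP, hc2def]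
    exact hsubU2
  have hsub3 : fine c3 ⊆ fine (recs ({a, b, c} : Finset V)) := by
    rw [hfineP, hc3def]
    exact hsubU3
  have hd12 : fine c1 ∩ fine c2 = ∅ := by
    rw [hc1def, hc2def]
    exact hdU12
  have hd13 : fine c1 ∩ fine c3 = ∅ := by
    rw [hc1def, hc3def]
    exact hdU13
  have hd23 : fine c2 ∩ fine c3 = ∅ := by
    rw [hc2def, hc3def]
    exact hdU23
  have hx1 : K (D r) ∩ fine c1 = ∅ := by
    rw [hc1def]
    exact hxU1
  have hx2 : K (D q) ∩ fine c2 = ∅ := by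
    rw [hc2def]
    exact hxU2
  have hx3 : K (D p) ∩ fine c3 = ∅ := by
    rw [hc3def]
    exact hxU3
  have hFO1 : FaceOK D' (insert w S) s1 c1 := by
    rw [hc1def]
    simp only [FaceOK]
    refine ⟨Finset.mem_insert_of_mem hpS, Finset.mem_insert_of_mem hqS, Finset.mem_insert_self w S, hpq, hwp.symm, hwq.symm, ?_, ?_⟩
    · first
        | trivial
        | exact hs1def.trans ((Finset.insert_comm w p {q}).trans (congrArg (insert p) (Finset.pair_comm w q)))
    · rw [hD'v p hpS, hD'v q hqS, hD'w]
      simp only [Quad.mk_l, Quad.mk_x, Quad.mk_d, Quad.mk_y]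
      exact hnum1
  have hFO2 : FaceOK D' (insert w S) s2 c2 := by
    rw [hc2def]
    simp only [FaceOK]
    refine ⟨Finset.mem_insert_of_mem hpS, Finset.mem_insert_self w S, Finset.mem_insert_of_mem hrS, hwp.symm, hpr, hwr, ?_, ?_⟩
    · first
        | trivial
        | exact hs2def.trans (Finset.insert_comm w p {r})
    · rw [hD'v p hpS, hD'w, hD'v r hrS]
      simp only [Quad.mk_l, Quad.mk_x, Quad.mk_d, Quad.mk_y]
      exact hnum2
  have hFO3 : FaceOK D' (insert w S) s3 c3 := by
    rw [hc3def]
    simp only [FaceOK]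
    refine ⟨Finset.mem_insert_of_mem hqS, Finset.mem_insert_self w S, Finset.mem_insert_of_mem hrS, hwq.symm, hqr, hwr, ?_, ?_⟩
    · first
        | trivial
        | exact hs3def.trans (Finset.insert_comm w q {r})
    · rw [hD'v q hqS, hD'w, hD'v r hrS]
      simp only [Quad.mk_l, Quad.mk_x, Quad.mk_d, Quad.mk_y]
      exact hnum3
  refine ⟨D', recs', ?_, ?_, ?_, ?_, ?_⟩
  · intro v hv
    rw [Finset.mem_insert] at hv
    rcases hv with rfl | hvS
    · rw [hD'w]
      exact QOK_mk hWok.1 hWok.2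
    · rw [hD'v v hvS]; exact hQ v hvS
  · intro u v hadj
    rw [stepAdj] at hadj
    rcases hadj with hadj | ⟨hne, ⟨rfl, h2⟩ | ⟨rfl, h2⟩⟩
    · obtain ⟨h3, h4⟩ := hAdjS u v hadj
      exact ⟨Finset.mem_insert_of_mem h3, Finset.mem_insert_of_mem h4⟩
    · refine ⟨Finset.mem_insert_self _ _, ?_⟩
      rcases h2 with rfl | rfl | rfl
      exacts [Finset.mem_insert_of_mem haS, Finset.mem_insert_of_mem hbS,
        Finset.mem_insert_of_mem hcS]
    · refine ⟨?_, Finset.mem_insert_self _ _⟩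
      rcases h2 with rfl | rfl | rfl
      exacts [Finset.mem_insert_of_mem haS, Finset.mem_insert_of_mem hbS,
        Finset.mem_insert_of_mem hcS]
  · have hadj_w : ∀ x ∈ S, (x = p ∨ x = q ∨ x = r) → ∃ pt, K (D' w) ∩ K (D' x) = {pt} := by
      intro x hxS hx
      rw [hD'w, hD'v x hxS]
      rcases hx with rfl | rfl | rfl
      exacts [⟨_, hKwp⟩, ⟨_, hKwq⟩, ⟨_, hKwr⟩]
    have hemp_w : ∀ x ∈ S, ¬(x = p ∨ x = q ∨ x = r) → K (D' w) ∩ K (D' x) = ∅ := by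
      intro x hxS hx
      rw [hD'w, hD'v x hxS]
      have hnm : x ∉ ({a, b, c} : Finset V) := by
        intro hm
        simp only [Finset.mem_insert, Finset.mem_singleton] at hm
        exact hx ((key x).mp hm)
      exact inter_empty_comm (inter_empty_of_subset hKw_sub (hPriv x hxS hnm))
    intro u hu v hv huv
    rw [Finset.mem_insert] at hu hv
    rcases hu with rfl | huS
    · rcases hv with rfl | hvS
      · exact absurd rfl huv
      · constructor
        · intro hadj
          rw [stepAdj] at hadj
          rcases hadj with hadj | ⟨_, ⟨_, h2⟩ | ⟨h1, _⟩⟩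
          · exact absurd (hAdjS _ _ hadj).1 hw
          · exact hadj_w v hvS ((key v).mp h2)
          · exact absurd (h1 ▸ hvS) hw
        · intro hnadj
          apply hemp_w v hvS
          intro hvm
          apply hnadj
          rw [stepAdj]
          exact Or.inr ⟨huv, Or.inl ⟨rfl, (key v).mpr hvm⟩⟩
    · rcases hv with rfl | hvS
      · constructor
        · intro hadj
          rw [stepAdj] at hadj
          rcases hadj with hadj | ⟨_, ⟨h1, _⟩ | ⟨_, h2⟩⟩
          · exact absurd (hAdjS _ _ hadj).2 hw
          · exact absurd (h1 ▸ huS) hw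
          · obtain ⟨pt, hpt⟩ := hadj_w u huS ((key u).mp h2)
            exact ⟨pt, by rw [Set.inter_comm]; exact hpt⟩
        · intro hnadj
          refine inter_empty_comm (hemp_w u huS ?_)
          intro hum
          apply hnadj
          rw [stepAdj]
          exact Or.inr ⟨huv, Or.inr ⟨rfl, (key u).mpr hum⟩⟩
      · rw [hD'v u huS, hD'v v hvS]
        obtain ⟨k1, k2⟩ := hPair u huS v hvS huv
        constructor
        · intro hadj
          rw [stepAdj] at hadj
          rcases hadj with hadj | ⟨_, ⟨h1, _⟩ | ⟨h1, _⟩⟩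
          · exact k1 hadj
          · exact absurd (h1 ▸ huS) hw
          · exact absurd (h1 ▸ hvS) hw
        · intro hnadj
          exact k2 (fun hadj => hnadj (by rw [stepAdj]; exact Or.inl hadj))
  · intro f hfm
    rcases hmemF' f hfm with (rfl | rfl | rfl) | ⟨hfF, hfne⟩
    · rw [hrecs1]
      refine ⟨hFO1, ?_⟩
      intro u hu hunm
      rw [Finset.mem_insert] at hu
      rcases hu with huw | huS
      · exact absurd (by rw [huw, hs1def]; exact Finset.mem_insert_self w _) hunm
      · by_cases hum : u = r
        · rw [hum, hD'v r hrS]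
          exact hx1
        · have hnm : u ∉ ({a, b, c} : Finset V) := by
            intro hm
            simp only [Finset.mem_insert, Finset.mem_singleton] at hm
            rcases (key u).mp hm with rfl | rfl | rfl
            · first
                | exact hum rfl
                | exact hunm (by rw [hs1def]; simp)
            · first
                | exact hum rfl
                | exact hunm (by rw [hs1def]; simp)
            · first
                | exact hum rfl
                | exact hunm (by rw [hs1def]; simp)
          rw [hD'v u huS]
          exact inter_empty_of_subset hsub1 (hPriv u huS hnm)
    · rw [hrecs2]
      refine ⟨hFO2, ?_⟩
      intro u hu hunm
      rw [Finset.mem_insert] at hu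
      rcases hu with huw | huS
      · exact absurd (by rw [huw, hs2def]; exact Finset.mem_insert_self w _) hunm
      · by_cases hum : u = q
        · rw [hum, hD'v q hqS]
          exact hx2
        · have hnm : u ∉ ({a, b, c} : Finset V) := by
            intro hm
            simp only [Finset.mem_insert, Finset.mem_singleton] at hm
            rcases (key u).mp hm with rfl | rfl | rfl
            · first
                | exact hum rfl
                | exact hunm (by rw [hs2def]; simp)
            · first
                | exact hum rfl
                | exact hunm (by rw [hs2def]; simp)
            · first
                | exact hum rfl
                | exact hunm (by rw [hs2def]; simp)
          rw [hD'v u huS]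
          exact inter_empty_of_subset hsub2 (hPriv u huS hnm)
    · rw [hrecs3]
      refine ⟨hFO3, ?_⟩
      intro u hu hunm
      rw [Finset.mem_insert] at hu
      rcases hu with huw | huS
      · exact absurd (by rw [huw, hs3def]; exact Finset.mem_insert_self w _) hunm
      · by_cases hum : u = p
        · rw [hum, hD'v p hpS]
          exact hx3
        · have hnm : u ∉ ({a, b, c} : Finset V) := by
            intro hm
            simp only [Finset.mem_insert, Finset.mem_singleton] at hm
            rcases (key u).mp hm with rfl | rfl | rfl
            · first
                | exact hum rfl
                | exact hunm (by rw [hs3def]; simp)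
            · first
                | exact hum rfl
                | exact hunm (by rw [hs3def]; simp)
            · first
                | exact hum rfl
                | exact hunm (by rw [hs3def]; simp)
          rw [hD'v u huS]
          exact inter_empty_of_subset hsub3 (hPriv u huS hnm)
    · have hre : recs' f = recs f := hrecsold f hfF hfne
      rw [hre]
      obtain ⟨hFOf, hPrivf⟩ := hFace f hfF
      refine ⟨FaceOK_mono hFOf (Finset.subset_insert w S) hD'v, ?_⟩
      intro u hu hunf
      rw [Finset.mem_insert] at hu
      rcases hu with rfl | huS
      · rw [hD'w]
        exact inter_empty_of_subset' hKw_sub (hFF {a, b, c} hfmem f hfF (Ne.symm hfne))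
      · rw [hD'v u huS]
        exact hPrivf u huS hunf
  · intro f hfm f' hfm' hne
    rcases hmemF' f hfm with (hf1 | hf1 | hf1) | ⟨hfF, hfne⟩ <;>
      rcases hmemF' f' hfm' with (hf2 | hf2 | hf2) | ⟨hfF', hfne'⟩
    · exact absurd (hf1.trans hf2.symm) hne
    · subst hf1; subst hf2; rw [hrecs1, hrecs2]; exact hd12
    · subst hf1; subst hf2; rw [hrecs1, hrecs3]; exact hd13
    · subst hf1
      rw [hrecsold f' hfF' hfne', hrecs1]
      exact inter_empty_of_subset' hsub1 (hFF {a, b, c} hfmem f' hfF' (Ne.symm hfne'))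
    · subst hf1; subst hf2; rw [hrecs2, hrecs1]; exact inter_empty_comm hd12
    · exact absurd (hf1.trans hf2.symm) hne
    · subst hf1; subst hf2; rw [hrecs2, hrecs3]; exact hd23
    · subst hf1
      rw [hrecsold f' hfF' hfne', hrecs2]
      exact inter_empty_of_subset' hsub2 (hFF {a, b, c} hfmem f' hfF' (Ne.symm hfne'))
    · subst hf1; subst hf2; rw [hrecs3, hrecs1]; exact inter_empty_comm hd13
    · subst hf1; subst hf2; rw [hrecs3, hrecs2]; exact inter_empty_comm hd23
    · exact absurd (hf1.trans hf2.symm) hne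
    · subst hf1
      rw [hrecsold f' hfF' hfne', hrecs3]
      exact inter_empty_of_subset' hsub3 (hFF {a, b, c} hfmem f' hfF' (Ne.symm hfne'))
    · subst hf2
      rw [hrecsold f hfF hfne, hrecs1]
      exact inter_empty_comm
        (inter_empty_of_subset' hsub1 (hFF {a, b, c} hfmem f hfF (Ne.symm hfne)))
    · subst hf2
      rw [hrecsold f hfF hfne, hrecs2]
      exact inter_empty_comm
        (inter_empty_of_subset' hsub2 (hFF {a, b, c} hfmem f hfF (Ne.symm hfne)))
    · subst hf2
      rw [hrecsold f hfF hfne, hrecs3]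
      exact inter_empty_comm
        (inter_empty_of_subset' hsub3 (hFF {a, b, c} hfmem f hfF (Ne.symm hfne)))
    · rw [hrecsold f hfF hfne, hrecsold f' hfF' hfne']
      exact hFF f hfF f' hfF' hne

end S3TProof

namespace S3TProof
variable {V : Type*} [DecidableEq V]
set_option linter.unusedSectionVars false

lemma inv_of {G : SimpleGraph V} {S : Finset V} {F : Finset (Finset V)}
    (hH : IsStacked3Tree G S F) : Inv G S F := by
  induction hH with
  | base a b c hab hac hbc => exact inv_base a b c hab hac hbc
  | stack a b c w ht hf hw ih => exact inv_step a b c w ih hf hw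

end S3TProof

/-- Every planar 3-tree (stacked 3-tree) has a 1-string B₁-VPG representation. -/
theorem stacked3Tree_has_oneString_B1VPG {V : Type*} [DecidableEq V]
    (H : SimpleGraph V) (S : Finset V) (F : Finset (Finset V))
    (hH : IsStacked3Tree H S F) :
    ∃ c : V → Set (ℝ × ℝ),
      (∀ v ∈ S, IsB1Curve (c v)) ∧
      ∀ u ∈ S, ∀ v ∈ S, u ≠ v →
        (((c u ∩ c v).Nonempty ↔ H.Adj u v) ∧ (c u ∩ c v).Subsingleton) := by
  classical
  obtain ⟨D, recs, hQ, hAdjS, hPair, hFace, hFF⟩ := S3TProof.inv_of hH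
  refine ⟨fun v => S3TProof.K (D v), fun v hv => S3TProof.isB1_K (hQ v hv), ?_⟩
  intro u hu v hv huv
  obtain ⟨h1, h2⟩ := hPair u hu v hv huv
  constructor
  · constructor
    · intro hne
      by_contra hadj
      rw [h2 hadj] at hne
      exact Set.not_nonempty_empty hne
    · intro hadj
      obtain ⟨pt, hpt⟩ := h1 hadj
      rw [hpt]
      exact ⟨pt, rfl⟩
  · by_cases hadj : H.Adj u v
    · obtain ⟨pt, hpt⟩ := h1 hadj
      rw [hpt]
      exact Set.subsingleton_singleton
    · rw [h2 hadj]
      exact Set.subsingleton_empty
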